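/- arXiv:2103.13911 — 6 statements merged into one kernel-verified Lean document; each statement's English description precedes it below -/
import Mathlib

section
/- Let C be a stable ∞-category with a weight structure. Then C_{[-∞,b]} equals the full subcategory of all X ∈ C such that the mapping spectrum hom_C(X,Y) is connective for every Y ∈ C_{[b,∞]}. Dually, C_{[a,∞]} equals the full subcategory of all X such that hom_C(Y,X) is connective for every Y ∈ C_{[-∞,a]}. In particular C_{[a,∞]} is closed under pushouts, C_{[-∞,b]} is closed under pullbacks, and all C_{[a,b]} are closed under extensions. -/
open CategoryTheory Limits Pretriangulated

universe v u

variable (C : Type u) [Category.{v} C] [HasZeroObject C] [HasShift C ℤ]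
  [Preadditive C] [∀ n : ℤ, (CategoryTheory.shiftFunctor C n).Additive] [Pretriangulated C]

/-- A weight structure on a stable (pretriangulated) category: two subcategories
`conn = C_{[0,∞]}` and `coconn = C_{[-∞,0]}`, closed under retracts, such that the mapping
spectrum `hom(X,Y)` is connective (i.e. `Hom(X⟦i⟧, Y) = 0` for `i < 0`) whenever
`X ∈ coconn` and `Y ∈ conn`, and every object admits a weight decomposition. -/
structure WeightStructure : Type (max u v) where
  conn : Set C
  coconn : Set C
  conn_retract : ∀ ⦃X Y : C⦄ (i : X ⟶ Y) (r : Y ⟶ X), i ≫ r = 𝟙 X → conn Y → conn X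
  coconn_retract : ∀ ⦃X Y : C⦄ (i : X ⟶ Y) (r : Y ⟶ X), i ≫ r = 𝟙 X → coconn Y → coconn X
  hom_conn : ∀ ⦃X Y : C⦄, coconn X → conn Y → ∀ i : ℤ, i < 0 → ∀ f : X⟦i⟧ ⟶ Y, f = 0
  exists_decomp : ∀ X : C, ∃ (Y Z : C) (f : Y ⟶ X) (g : X ⟶ Z) (h : Z ⟶ Y⟦(1 : ℤ)⟧),
    (Triangle.mk f g h ∈ distTriang C) ∧ coconn Y ∧ conn (Z⟦(-1 : ℤ)⟧)

namespace WeightStructure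

variable {C}

/-- `X ∈ C_{[a,∞]}`, i.e. `X⟦-a⟧ ∈ C_{[0,∞]}`. -/
def memGE (W : WeightStructure C) (a : ℤ) (X : C) : Prop := W.conn (X⟦(-a)⟧)

/-- `X ∈ C_{[-∞,b]}`, i.e. `X⟦-b⟧ ∈ C_{[-∞,0]}`. -/
def memLE (W : WeightStructure C) (b : ℤ) (X : C) : Prop := W.coconn (X⟦(-b)⟧)

end WeightStructure

/-!
One inclusion in each characterization is the axiom `hom_conn`, shifted. Conversely, if
`hom(X, Y)` is connective for every `Y ∈ C_{[0,∞]}`, then in a weight decomposition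
`K → X → Q` the map `X → Q` vanishes because `Q⟦-1⟧ ∈ C_{[0,∞]}`; the decomposition splits
and `X` is a retract of `K ∈ C_{[-∞,0]}`. Dually for `C_{[0,∞]}`, decomposing `X⟦1⟧`.
Once the weight classes are orthogonality classes, the closure properties follow: orthogonality
classes are closed under extensions and retracts, and the pushout (pullback) of a span is a
retract of the cofibre of `Z ⟶ X ⊞ Y` (the fibre of `X ⊞ Y ⟶ Z`).
-/

namespace CategoryTheory

section HomConnective

variable {D : Type*} [Category D] [HasZeroMorphisms D] [HasShift D ℤ]

/-- The mapping spectrum `hom(X, Y)` is connective, `π_i hom(X, Y) = Hom(X⟦i⟧, Y)`. -/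
def HomConnective (X Y : D) : Prop := ∀ i : ℤ, i < 0 → ∀ f : X⟦i⟧ ⟶ Y, f = 0

namespace HomConnective

variable {X X' Y Y' : D}

lemma of_retract_left (h : HomConnective X Y) (e : Retract X' X) : HomConnective X' Y := by
  intro i hi f
  rw [← Category.id_comp f, ← (e.map (shiftFunctor D i)).retract, Category.assoc,
    h i hi (_ ≫ f), comp_zero]

lemma of_retract_right (h : HomConnective X Y) (e : Retract Y' Y) : HomConnective X Y' := by
  intro i hi f
  rw [← Category.comp_id f, ← e.retract, ← Category.assoc, h i hi (f ≫ e.i), zero_comp]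

lemma of_iso (h : HomConnective X Y) (eX : X' ≅ X) (eY : Y' ≅ Y) : HomConnective X' Y' :=
  (h.of_retract_left eX.retract).of_retract_right eY.retract

lemma eq_zero_of_shift_right (h : HomConnective X Y) {n : ℤ} (hn : 0 < n) (f : X ⟶ Y⟦n⟧) :
    f = 0 := by
  obtain ⟨g, hg⟩ := (shiftFunctor D n).map_surjective ((shiftNegShift X n).hom ≫ f)
  rw [← cancel_epi (shiftNegShift X n).hom, comp_zero, ← hg, h (-n) (by omega) g,
    Functor.map_zero]

lemma shift (h : HomConnective X Y) (n : ℤ) : HomConnective (X⟦n⟧) (Y⟦n⟧) := by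
  intro i hi f
  obtain ⟨g, hg⟩ := (shiftFunctor D n).map_surjective ((shiftComm X i n).hom ≫ f)
  rw [← cancel_epi (shiftComm X i n).hom, comp_zero, ← hg, h i hi g, Functor.map_zero]

lemma shift_iff (n : ℤ) : HomConnective (X⟦n⟧) (Y⟦n⟧) ↔ HomConnective X Y :=
  ⟨fun h ↦ (h.shift (-n)).of_iso (shiftShiftNeg X n).symm (shiftShiftNeg Y n).symm,
    fun h ↦ h.shift n⟩

lemma shift_left_of_nonpos (h : HomConnective X Y) {n : ℤ} (hn : n ≤ 0) :
    HomConnective (X⟦n⟧) Y := by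
  intro i hi f
  rw [← cancel_epi ((shiftFunctorAdd D n i).app X).hom, comp_zero]
  exact h (n + i) (by omega) _

lemma shift_right_of_nonneg (h : HomConnective X Y) {n : ℤ} (hn : 0 ≤ n) :
    HomConnective X (Y⟦n⟧) :=
  ((h.shift_left_of_nonpos (neg_nonpos.2 hn)).shift n).of_iso (shiftNegShift X n).symm
    (Iso.refl _)

end HomConnective

end HomConnective

section Pretriangulated

variable {D : Type*} [Category D] [HasZeroObject D] [HasShift D ℤ] [Preadditive D]
  [∀ n : ℤ, (shiftFunctor D n).Additive] [Pretriangulated D]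

namespace HomConnective

variable {X Y : D} {T : Triangle D}

lemma ext₂_left (hT : T ∈ distTriang D) (h₁ : HomConnective T.obj₁ Y)
    (h₃ : HomConnective T.obj₃ Y) : HomConnective T.obj₂ Y := by
  intro i hi f
  obtain ⟨g, rfl⟩ := Triangle.yoneda_exact₂ _ (Triangle.shift_distinguished T hT i) f (by
    change (i.negOnePow • T.mor₁⟦i⟧') ≫ f = 0
    rw [Linear.units_smul_comp, h₁ i hi (T.mor₁⟦i⟧' ≫ f), smul_zero])
  rw [h₃ i hi g]
  exact comp_zero

lemma ext₂_right (hT : T ∈ distTriang D) (h₁ : HomConnective X T.obj₁)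
    (h₃ : HomConnective X T.obj₃) : HomConnective X T.obj₂ := by
  intro i hi f
  obtain ⟨g, rfl⟩ := T.coyoneda_exact₂ hT f (h₃ i hi _)
  rw [h₁ i hi g, zero_comp]

lemma biprod_left {A B : D} (hA : HomConnective A Y) (hB : HomConnective B Y) :
    HomConnective (A ⊞ B) Y :=
  ext₂_left (binaryBiproductTriangle_distinguished A B) hA hB

lemma biprod_right {A B : D} (hA : HomConnective X A) (hB : HomConnective X B) :
    HomConnective X (A ⊞ B) :=
  ext₂_right (binaryBiproductTriangle_distinguished A B) hA hB

end HomConnective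

lemma IsPushout.nonempty_retract_of_distTriang {P X Y Z : D} {f : Z ⟶ X}
    {g : Z ⟶ Y} {inl : X ⟶ P} {inr : Y ⟶ P} (h : IsPushout f g inl inr) {Q : D}
    {π : X ⊞ Y ⟶ Q} {δ : Q ⟶ Z⟦(1 : ℤ)⟧}
    (hT : Triangle.mk (biprod.lift f (-g)) π δ ∈ distTriang D) : Nonempty (Retract P Q) := by
  have hπ : f ≫ biprod.inl ≫ π = g ≫ biprod.inr ≫ π := by
    have h₀ : biprod.lift f (-g) ≫ π = 0 := comp_distTriang_mor_zero₁₂ _ hT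
    simpa only [biprod.lift_eq, Preadditive.add_comp, Preadditive.neg_comp, Category.assoc,
      add_neg_eq_zero] using h₀
  have hdesc : biprod.lift f (-g) ≫ biprod.desc inl inr = 0 := by
    rw [biprod.lift_desc, h.w]
    simp
  obtain ⟨v, hv⟩ : ∃ v : Q ⟶ P, biprod.desc inl inr = π ≫ v :=
    Triangle.yoneda_exact₂ _ hT _ hdesc
  exact ⟨⟨h.desc _ _ hπ, v, h.hom_ext (by simp [← hv]) (by simp [← hv])⟩⟩

lemma IsPullback.nonempty_retract_of_distTriang {P X Y Z : D} {fst : P ⟶ X}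
    {snd : P ⟶ Y} {f : X ⟶ Z} {g : Y ⟶ Z} (h : IsPullback fst snd f g) {F : D}
    {ι : F ⟶ X ⊞ Y} {δ : Z ⟶ F⟦(1 : ℤ)⟧}
    (hT : Triangle.mk ι (biprod.desc f (-g)) δ ∈ distTriang D) : Nonempty (Retract P F) := by
  have hι : (ι ≫ biprod.fst) ≫ f = (ι ≫ biprod.snd) ≫ g := by
    have h₀ : ι ≫ biprod.desc f (-g) = 0 := comp_distTriang_mor_zero₁₂ _ hT
    simpa only [biprod.desc_eq, Preadditive.comp_add, Preadditive.comp_neg, Category.assoc,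
      add_neg_eq_zero] using h₀
  have hlift : biprod.lift fst snd ≫ biprod.desc f (-g) = 0 := by
    rw [biprod.lift_desc, h.w]
    simp
  obtain ⟨u, hu⟩ : ∃ u : P ⟶ F, biprod.lift fst snd = u ≫ ι :=
    Triangle.coyoneda_exact₂ _ hT _ hlift
  exact ⟨⟨u, h.lift _ _ hι, h.hom_ext (by simp [← reassoc_of% hu])
    (by simp [← reassoc_of% hu])⟩⟩

end Pretriangulated

end CategoryTheory

namespace WeightStructure

variable {C} (W : WeightStructure C)

lemma conn_of_retract {X Y : C} (e : Retract X Y) (hY : W.conn Y) : W.conn X :=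
  W.conn_retract e.i e.r e.retract hY

lemma coconn_of_retract {X Y : C} (e : Retract X Y) (hY : W.coconn Y) : W.coconn X :=
  W.coconn_retract e.i e.r e.retract hY

lemma homConnective_of_memLE_of_memGE {n : ℤ} {X Y : C} (hX : W.memLE n X)
    (hY : W.memGE n Y) : HomConnective X Y :=
  (HomConnective.shift_iff (-n)).1 (W.hom_conn hX hY)

lemma coconn_of_forall_homConnective {X : C} (h : ∀ Y, W.conn Y → HomConnective X Y) :
    W.coconn X := by
  obtain ⟨K, Q, f, g, δ, hT, hK, hQ⟩ := W.exists_decomp X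
  have hg : g = 0 := (shiftFunctor C (-1 : ℤ)).map_injective (by
    rw [Functor.map_zero]
    exact h _ hQ (-1) (by norm_num) _)
  obtain ⟨s, hs⟩ : ∃ s : X ⟶ K, 𝟙 X = s ≫ f :=
    Triangle.coyoneda_exact₂ _ hT (𝟙 X) (by rw [Triangle.mk_mor₂, hg]; exact comp_zero)
  exact W.coconn_of_retract ⟨s, f, hs.symm⟩ hK

lemma conn_of_forall_homConnective {X : C} (h : ∀ Y, W.coconn Y → HomConnective Y X) :
    W.conn X := by
  obtain ⟨K, Q, f, g, δ, hT, hK, hQ⟩ := W.exists_decomp (X⟦(1 : ℤ)⟧)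
  have hf : f = 0 := (h K hK).eq_zero_of_shift_right one_pos f
  obtain ⟨r, hr⟩ : ∃ r : Q ⟶ X⟦(1 : ℤ)⟧, 𝟙 _ = g ≫ r :=
    Triangle.yoneda_exact₂ _ hT (𝟙 _) (by rw [Triangle.mk_mor₁, hf]; exact zero_comp)
  exact W.conn_of_retract ((shiftShiftNeg X (1 : ℤ)).symm.retract.trans
    ((⟨g, r, hr.symm⟩ : Retract _ Q).map (shiftFunctor C (-1)))) hQ

lemma memLE_iff {b : ℤ} {X : C} : W.memLE b X ↔ ∀ Y, W.memGE b Y → HomConnective X Y := by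
  refine ⟨fun hX Y hY ↦ W.homConnective_of_memLE_of_memGE hX hY,
    fun h ↦ W.coconn_of_forall_homConnective fun Y hY ↦ ?_⟩
  have hY' : W.memGE b (Y⟦b⟧) := W.conn_of_retract (shiftShiftNeg Y b).retract hY
  exact ((h _ hY').shift (-b)).of_iso (Iso.refl _) (shiftShiftNeg Y b).symm

lemma memGE_iff {a : ℤ} {X : C} : W.memGE a X ↔ ∀ Y, W.memLE a Y → HomConnective Y X := by
  refine ⟨fun hX Y hY ↦ W.homConnective_of_memLE_of_memGE hY hX,
    fun h ↦ W.conn_of_forall_homConnective fun Y hY ↦ ?_⟩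
  have hY' : W.memLE a (Y⟦a⟧) := W.coconn_of_retract (shiftShiftNeg Y a).retract hY
  exact ((h _ hY').shift (-a)).of_iso (shiftShiftNeg Y a).symm (Iso.refl _)

lemma memGE_of_isPushout {a : ℤ} {P X Y Z : C} {f : Z ⟶ X} {g : Z ⟶ Y} {inl : X ⟶ P}
    {inr : Y ⟶ P} (h : IsPushout f g inl inr) (hX : W.memGE a X) (hY : W.memGE a Y)
    (hZ : W.memGE a Z) : W.memGE a P := by
  obtain ⟨Q, π, δ, hT⟩ := distinguished_cocone_triangle (biprod.lift f (-g))
  obtain ⟨e⟩ := h.nonempty_retract_of_distTriang hT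
  rw [memGE_iff] at hX hY hZ ⊢
  intro L hL
  exact (HomConnective.ext₂_right (rot_of_distTriang _ hT) ((hX L hL).biprod_right (hY L hL))
    ((hZ L hL).shift_right_of_nonneg zero_le_one)).of_retract_right e

lemma memLE_of_isPullback {b : ℤ} {P X Y Z : C} {fst : P ⟶ X} {snd : P ⟶ Y} {f : X ⟶ Z}
    {g : Y ⟶ Z} (h : IsPullback fst snd f g) (hX : W.memLE b X) (hY : W.memLE b Y)
    (hZ : W.memLE b Z) : W.memLE b P := by
  obtain ⟨F, ι, δ, hT⟩ := distinguished_cocone_triangle₁ (biprod.desc f (-g))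
  obtain ⟨e⟩ := h.nonempty_retract_of_distTriang hT
  rw [memLE_iff] at hX hY hZ ⊢
  intro L hL
  exact (HomConnective.ext₂_left (inv_rot_of_distTriang _ hT)
    ((hZ L hL).shift_left_of_nonpos (by norm_num))
    ((hX L hL).biprod_left (hY L hL))).of_retract_left e

lemma memGE_ext₂ {a : ℤ} {T : Triangle C} (hT : T ∈ distTriang C) (h₁ : W.memGE a T.obj₁)
    (h₃ : W.memGE a T.obj₃) : W.memGE a T.obj₂ :=
  W.memGE_iff.2 fun L hL ↦
    HomConnective.ext₂_right hT (W.memGE_iff.1 h₁ L hL) (W.memGE_iff.1 h₃ L hL)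

lemma memLE_ext₂ {b : ℤ} {T : Triangle C} (hT : T ∈ distTriang C) (h₁ : W.memLE b T.obj₁)
    (h₃ : W.memLE b T.obj₃) : W.memLE b T.obj₂ :=
  W.memLE_iff.2 fun L hL ↦
    HomConnective.ext₂_left hT (W.memLE_iff.1 h₁ L hL) (W.memLE_iff.1 h₃ L hL)

end WeightStructure

/-- `C_{[-∞,b]}` consists exactly of the `X` with `hom_C(X,Y)` connective for all
`Y ∈ C_{[b,∞]}`; dually `C_{[a,∞]}` consists exactly of the `X` with `hom_C(Y,X)` connective
for all `Y ∈ C_{[-∞,a]}`.  In particular `C_{[a,∞]}` is closed under pushouts, `C_{[-∞,b]}`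
under pullbacks, and all `C_{[a,b]}` are closed under extensions. -/
theorem stmt2 (W : WeightStructure C) :
    (∀ (b : ℤ) (X : C), W.memLE b X ↔
      ∀ Y : C, W.memGE b Y → ∀ i : ℤ, i < 0 → ∀ f : X⟦i⟧ ⟶ Y, f = 0) ∧
    (∀ (a : ℤ) (X : C), W.memGE a X ↔
      ∀ Y : C, W.memLE a Y → ∀ i : ℤ, i < 0 → ∀ f : Y⟦i⟧ ⟶ X, f = 0) ∧
    (∀ (a : ℤ) {P X Y Z : C} (f : Z ⟶ X) (g : Z ⟶ Y) (inl : X ⟶ P) (inr : Y ⟶ P),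
      IsPushout f g inl inr → W.memGE a X → W.memGE a Y → W.memGE a Z → W.memGE a P) ∧
    (∀ (b : ℤ) {P X Y Z : C} (fst : P ⟶ X) (snd : P ⟶ Y) (f : X ⟶ Z) (g : Y ⟶ Z),
      IsPullback fst snd f g → W.memLE b X → W.memLE b Y → W.memLE b Z → W.memLE b P) ∧
    (∀ (a b : ℤ) (T : Triangle C), T ∈ (distTriang C) →
      (W.memGE a T.obj₁ ∧ W.memLE b T.obj₁) → (W.memGE a T.obj₃ ∧ W.memLE b T.obj₃) →
      (W.memGE a T.obj₂ ∧ W.memLE b T.obj₂)) :=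
  ⟨fun _ _ ↦ W.memLE_iff, fun _ _ ↦ W.memGE_iff,
    fun _ _ _ _ _ _ _ _ _ h ↦ W.memGE_of_isPushout h,
    fun _ _ _ _ _ _ _ _ _ h ↦ W.memLE_of_isPullback h,
    fun _ _ _ hT h₁ h₃ ↦ ⟨W.memGE_ext₂ hT h₁.1 h₃.1, W.memLE_ext₂ hT h₁.2 h₃.2⟩⟩
end

section
/- Let A be an additive category and Y a chain complex in A with Y_j = 0 for all j < i, and suppose s : Y_i → Y_{i+1} satisfies d_{i+1} ∘ s = id_{Y_i}, where d_{i+1} : Y_{i+1} → Y_i is the differential. Then Y is chain homotopy equivalent to the complex Z given by Z_j = Y_j for j ∉ {i, i+2}, Z_i = 0, Z_{i+2} = Y_{i+2} ⊕ Y_i, with differentials d_{j} of Y away from degrees i+3, i+2, i+1, the differential (d_{i+3},0) : Y_{i+3} → Y_{i+2} ⊕ Y_i in degree i+3, and (d_{i+2}, s) : Y_{i+2} ⊕ Y_i → Y_{i+1} in degree i+2. -/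
open CategoryTheory Limits

universe v u

set_option linter.unusedSectionVars false

namespace Stmt6Aux

variable {A : Type u} [Category.{v} A] [Preadditive A] [HasZeroObject A]
    [HasBinaryBiproducts A]
    (Y Z : ChainComplex A ℤ) (i : ℤ)
    (s : Y.X i ⟶ Y.X (i + 1))
    (e : ∀ j : ℤ, j ≠ i → j ≠ i + 2 → (Z.X j ≅ Y.X j))
    (e2 : Z.X (i + 2) ≅ Y.X (i + 2) ⊞ Y.X i)

/-- components of the map `Y ⟶ Z` -/
noncomputable def ff (j : ℤ) : Y.X j ⟶ Z.X j :=
  if h : j = i then 0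
  else if h2 : j = i + 2 then
    eqToHom (congrArg Y.X h2) ≫ biprod.inl ≫ e2.inv ≫ eqToHom (congrArg Z.X h2.symm)
  else (e j h h2).inv

/-- components of the map `Z ⟶ Y` -/
noncomputable def gg (j : ℤ) : Z.X j ⟶ Y.X j :=
  if h : j = i then 0
  else if h2 : j = i + 2 then
    eqToHom (congrArg Z.X h2) ≫ e2.hom ≫ biprod.fst ≫ eqToHom (congrArg Y.X h2.symm)
  else if h1 : j = i + 1 then
    eqToHom (congrArg Z.X h1) ≫ (e (i + 1) (by omega) (by omega)).hom ≫
      (𝟙 (Y.X (i + 1)) - Y.d (i + 1) i ≫ s) ≫ eqToHom (congrArg Y.X h1.symm)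
  else (e j h h2).hom

/-- the homotopy components for `f ≫ g ≃ 𝟙 Y` -/
noncomputable def kY (a b : ℤ) : Y.X a ⟶ Y.X b :=
  if h : a = i ∧ b = i + 1 then
    eqToHom (congrArg Y.X h.1) ≫ (-s) ≫ eqToHom (congrArg Y.X h.2.symm)
  else 0

/-- the homotopy components for `g ≫ f ≃ 𝟙 Z` -/
noncomputable def kZ (a b : ℤ) : Z.X a ⟶ Z.X b :=
  if h : a = i + 1 ∧ b = i + 2 then
    eqToHom (congrArg Z.X h.1) ≫ (e (i + 1) (by omega) (by omega)).hom ≫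
      (-(Y.d (i + 1) i ≫ biprod.inr)) ≫ e2.inv ≫ eqToHom (congrArg Z.X h.2.symm)
  else 0

lemma ff_i : ff Y Z i e e2 i = 0 := dif_pos rfl

lemma ff_i2 : ff Y Z i e e2 (i + 2) = biprod.inl ≫ e2.inv := by
  rw [ff, dif_neg (by omega : ¬ i + 2 = i), dif_pos rfl]
  simp

lemma ff_other (j : ℤ) (h : j ≠ i) (h2 : j ≠ i + 2) :
    ff Y Z i e e2 j = (e j h h2).inv := by
  rw [ff, dif_neg h, dif_neg h2]

lemma gg_i : gg Y Z i s e e2 i = 0 := dif_pos rfl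

lemma gg_i2 : gg Y Z i s e e2 (i + 2) = e2.hom ≫ biprod.fst := by
  rw [gg, dif_neg (by omega : ¬ i + 2 = i), dif_pos rfl]
  simp

lemma gg_i1 (h : i + 1 ≠ i) (h2 : i + 1 ≠ i + 2) : gg Y Z i s e e2 (i + 1) =
    (e (i + 1) h h2).hom ≫ (𝟙 (Y.X (i + 1)) - Y.d (i + 1) i ≫ s) := by
  rw [gg, dif_neg (by omega : ¬ i + 1 = i), dif_neg (by omega : ¬ i + 1 = i + 2),
    dif_pos rfl]
  simp

lemma gg_other (j : ℤ) (h : j ≠ i) (h1 : j ≠ i + 1) (h2 : j ≠ i + 2) :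
    gg Y Z i s e e2 j = (e j h h2).hom := by
  rw [gg, dif_neg h, dif_neg h2, dif_neg h1]

lemma kY_i : kY Y i s i (i + 1) = -s := by
  rw [kY, dif_pos ⟨rfl, rfl⟩]; simp

lemma kY_ne (a b : ℤ) (h : ¬(a = i ∧ b = i + 1)) : kY Y i s a b = 0 := dif_neg h

lemma kZ_i1 (h : i + 1 ≠ i) (h2 : i + 1 ≠ i + 2) : kZ Y Z i e e2 (i + 1) (i + 2) =
    (e (i + 1) h h2).hom ≫ (-(Y.d (i + 1) i ≫ biprod.inr)) ≫ e2.inv := by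
  rw [kZ, dif_pos ⟨rfl, rfl⟩]; simp

lemma kZ_ne (a b : ℤ) (h : ¬(a = i + 1 ∧ b = i + 2)) : kZ Y Z i e e2 a b = 0 :=
  dif_neg h

end Stmt6Aux

open Stmt6Aux in
/-- Splitting off a contractible piece from a chain complex: if `Y` is a chain complex in an
additive category with `Y_j = 0` for `j < i` and the differential `d_{i+1} : Y_{i+1} → Y_i`
admits a section `s`, then `Y` is chain homotopy equivalent to the complex `Z` with
`Z_i = 0`, `Z_{i+2} = Y_{i+2} ⊕ Y_i`, `Z_j = Y_j` otherwise, differentials those of `Y`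
away from degrees `i+3, i+2, i+1`, differential `(d_{i+3}, 0)` in degree `i+3` and
`(d_{i+2}, s)` in degree `i+2`.  Here `Z` is quantified over all complexes presenting
this data (via the isomorphisms `e`, `e2`). -/
theorem stmt6 {A : Type u} [Category.{v} A] [Preadditive A] [HasZeroObject A]
    [HasBinaryBiproducts A]
    (Y Z : ChainComplex A ℤ) (i : ℤ)
    (hY : ∀ j : ℤ, j < i → IsZero (Y.X j))
    (s : Y.X i ⟶ Y.X (i + 1)) (hs : s ≫ Y.d (i + 1) i = 𝟙 (Y.X i))
    (e : ∀ j : ℤ, j ≠ i → j ≠ i + 2 → (Z.X j ≅ Y.X j))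
    (hZi : IsZero (Z.X i))
    (e2 : Z.X (i + 2) ≅ Y.X (i + 2) ⊞ Y.X i)
    (hcomm : ∀ (j : ℤ) (h1 : j + 1 ≠ i) (h2 : j + 1 ≠ i + 2) (h3 : j ≠ i) (h4 : j ≠ i + 2),
      (e (j + 1) h1 h2).inv ≫ Z.d (j + 1) j ≫ (e j h3 h4).hom = Y.d (j + 1) j)
    (hd3 : ∀ (h1 : i + 3 ≠ i) (h2 : i + 3 ≠ i + 2),
      (e (i + 3) h1 h2).inv ≫ Z.d (i + 3) (i + 2) ≫ e2.hom =
        biprod.lift (Y.d (i + 3) (i + 2)) 0)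
    (hd2 : ∀ (h3 : i + 1 ≠ i) (h4 : i + 1 ≠ i + 2),
      e2.inv ≫ Z.d (i + 2) (i + 1) ≫ (e (i + 1) h3 h4).hom =
        biprod.desc (Y.d (i + 2) (i + 1)) s) :
    Nonempty (HomotopyEquiv Y Z) := by
  classical
  -- expressions for the differentials of `Z`
  have hZd2 : ∀ (h3 : i + 1 ≠ i) (h4 : i + 1 ≠ i + 2),
      Z.d (i + 2) (i + 1) =
        e2.hom ≫ biprod.desc (Y.d (i + 2) (i + 1)) s ≫ (e (i + 1) h3 h4).inv := by
    intro h3 h4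
    rw [← hd2 h3 h4]
    simp
  have hZd3 : ∀ (h1 : i + 3 ≠ i) (h2 : i + 3 ≠ i + 2),
      Z.d (i + 3) (i + 2) =
        (e (i + 3) h1 h2).hom ≫ biprod.lift (Y.d (i + 3) (i + 2)) 0 ≫ e2.inv := by
    intro h1 h2
    rw [← hd3 h1 h2]
    simp
  have hZdg : ∀ (j : ℤ) (h1 : j + 1 ≠ i) (h2 : j + 1 ≠ i + 2) (h3 : j ≠ i) (h4 : j ≠ i + 2),
      Z.d (j + 1) j = (e (j + 1) h1 h2).hom ≫ Y.d (j + 1) j ≫ (e j h3 h4).inv := by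
    intro j h1 h2 h3 h4
    rw [← hcomm j h1 h2 h3 h4]
    simp
  -- the chain map `Y ⟶ Z`
  have fcomm : ∀ (jj j : ℤ), (ComplexShape.down ℤ).Rel jj j →
      ff Y Z i e e2 jj ≫ Z.d jj j = Y.d jj j ≫ ff Y Z i e e2 j := by
    intro jj j hrel
    have hrel' : j + 1 = jj := hrel
    by_cases hlt : jj < i
    · exact (hY jj hlt).eq_of_src _ _
    by_cases h0 : jj = i
    · obtain rfl := h0.symm
      rw [ff_i, zero_comp, (hY j (by omega)).eq_of_tgt (Y.d i j) 0, zero_comp]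
    by_cases h1 : j = i
    · obtain rfl := h1.symm
      obtain rfl : jj = i + 1 := by omega
      rw [hZi.eq_of_tgt (Z.d (i+1) i) 0, comp_zero, ff_i, comp_zero]
    by_cases h2 : j = i + 1
    · obtain rfl := h2
      obtain rfl : jj = i + 2 := by omega
      rw [ff_i2, ff_other Y Z i e e2 (i+1) (by omega) (by omega),
        hZd2 (by omega) (by omega)]
      simp
    by_cases h3 : j = i + 2
    · obtain rfl := h3
      obtain rfl : jj = i + 3 := by omega
      rw [ff_i2, ff_other Y Z i e e2 (i+3) (by omega) (by omega),
        hZd3 (by omega) (by omega)]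
      have hl : biprod.lift (Y.d (i + 3) (i + 2)) (0 : Y.X (i + 3) ⟶ Y.X i) =
          Y.d (i + 3) (i + 2) ≫ biprod.inl := by apply biprod.hom_ext <;> simp
      simp [hl]
    · obtain rfl : jj = j + 1 := hrel'.symm
      rw [ff_other Y Z i e e2 (j+1) (by omega) (by omega),
        ff_other Y Z i e e2 j h1 h3,
        hZdg j (by omega) (by omega) h1 h3]
      simp
  have gcomm : ∀ (jj j : ℤ), (ComplexShape.down ℤ).Rel jj j →
      gg Y Z i s e e2 jj ≫ Y.d jj j = Z.d jj j ≫ gg Y Z i s e e2 j := by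
    intro jj j hrel
    have hrel' : j + 1 = jj := hrel
    by_cases hlt : j < i
    · exact (hY j hlt).eq_of_tgt _ _
    by_cases h1 : j = i
    · obtain rfl := h1.symm
      obtain rfl : jj = i + 1 := by omega
      rw [gg_i, comp_zero, gg_i1 Y Z i s e e2 (by omega) (by omega)]
      simp [hs]
    by_cases h2 : j = i + 1
    · obtain rfl := h2
      obtain rfl : jj = i + 2 := by omega
      rw [gg_i2, gg_i1 Y Z i s e e2 (by omega) (by omega),
        hZd2 (by omega) (by omega)]
      simp only [Category.assoc, Iso.inv_hom_id_assoc, Iso.cancel_iso_hom_left]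
      ext
      · simp
      · simp [reassoc_of% hs]
    by_cases h3 : j = i + 2
    · obtain rfl := h3
      obtain rfl : jj = i + 3 := by omega
      rw [gg_i2, gg_other Y Z i s e e2 (i+3) (by omega) (by omega) (by omega),
        hZd3 (by omega) (by omega)]
      simp
    · obtain rfl : jj = j + 1 := hrel'.symm
      rw [gg_other Y Z i s e e2 (j+1) (by omega) (by omega) (by omega),
        gg_other Y Z i s e e2 j h1 h2 h3,
        hZdg j (by omega) (by omega) h1 h3]
      simp
  refine ⟨{
    hom := { f := ff Y Z i e e2, comm' := fcomm }
    inv := { f := gg Y Z i s e e2, comm' := gcomm }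
    homotopyHomInvId := {
      hom := kY Y i s
      zero := by
        intro a b hab
        apply kY_ne
        rintro ⟨rfl, rfl⟩
        exact hab (by simp)
      comm := by
        intro j
        simp only [HomologicalComplex.comp_f, HomologicalComplex.id_f]
        by_cases hlt : j < i
        · exact (hY j hlt).eq_of_src _ _
        rw [dNext_eq (kY Y i s) (show (ComplexShape.down ℤ).Rel j (j-1) by simp),
          prevD_eq (kY Y i s) (show (ComplexShape.down ℤ).Rel (j+1) j by simp)]
        by_cases h1 : j = i
        · obtain rfl := h1.symm
          rw [ff_i, zero_comp, kY_ne Y i s (i-1) i (by omega), kY_i]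
          simp [hs]
        by_cases h2 : j = i + 1
        · obtain rfl := h2
          rw [ff_other Y Z i e e2 (i+1) (by omega) (by omega),
            gg_i1 Y Z i s e e2 (by omega) (by omega),
            kY_ne Y i s (i+1) (i+1+1) (by omega)]
          rw [show (i + 1 - 1 : ℤ) = i by omega, kY_i]
          simp only [Iso.inv_hom_id_assoc, zero_comp, add_zero,
            Preadditive.comp_neg, sub_eq_add_neg]
          abel
        by_cases h3 : j = i + 2
        · obtain rfl := h3
          rw [ff_i2, gg_i2, kY_ne Y i s (i+2-1) (i+2) (by omega),
            kY_ne Y i s (i+2) (i+2+1) (by omega)]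
          simp
        · rw [ff_other Y Z i e e2 j h1 h3,
            gg_other Y Z i s e e2 j h1 h2 h3,
            kY_ne Y i s (j-1) j (by omega), kY_ne Y i s j (j+1) (by omega)]
          simp
    }
    homotopyInvHomId := {
      hom := kZ Y Z i e e2
      zero := by
        intro a b hab
        apply kZ_ne
        rintro ⟨rfl, rfl⟩
        exact hab (by simp only [ComplexShape.down_Rel]; omega)
      comm := by
        intro j
        simp only [HomologicalComplex.comp_f, HomologicalComplex.id_f]
        by_cases h1 : j = i
        · obtain rfl := h1.symm
          exact hZi.eq_of_src _ _
        rw [dNext_eq (kZ Y Z i e e2) (show (ComplexShape.down ℤ).Rel j (j-1) by simp),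
          prevD_eq (kZ Y Z i e e2) (show (ComplexShape.down ℤ).Rel (j+1) j by simp)]
        by_cases h2 : j = i + 1
        · obtain rfl := h2
          rw [show (i + 1 - 1 : ℤ) = i from by omega,
            show (i + 1 + 1 : ℤ) = i + 2 from by omega]
          rw [gg_i1 Y Z i s e e2 (by omega) (by omega),
            ff_other Y Z i e e2 (i+1) (by omega) (by omega),
            kZ_ne Y Z i e e2 i (i+1) (by omega),
            kZ_i1 Y Z i e e2 (by omega) (by omega),
            hZd2 (by omega) (by omega)]
          rw [← cancel_mono (e (i+1) (by omega) (by omega)).hom]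
          simp only [Category.assoc, Iso.inv_hom_id, Iso.inv_hom_id_assoc,
            Category.comp_id, comp_zero, zero_add, Preadditive.add_comp,
            Category.id_comp]
          simp only [Preadditive.comp_sub, Preadditive.sub_comp,
            Preadditive.neg_comp, Preadditive.comp_neg, Category.comp_id,
            Category.id_comp, Category.assoc, biprod.inr_desc]
          abel
        by_cases h3 : j = i + 2
        · obtain rfl := h3
          rw [show (i + 2 - 1 : ℤ) = i + 1 from by omega,
            show (i + 2 + 1 : ℤ) = i + 3 from by omega]
          rw [gg_i2, ff_i2,
            kZ_i1 Y Z i e e2 (by omega) (by omega),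
            kZ_ne Y Z i e e2 (i+2) (i+3) (by omega),
            hZd2 (by omega) (by omega)]
          rw [← cancel_mono e2.hom, ← cancel_epi e2.inv]
          simp only [Category.assoc, Iso.inv_hom_id, Iso.inv_hom_id_assoc,
            Category.comp_id, zero_comp, comp_zero, add_zero,
            Preadditive.add_comp, Preadditive.comp_add, Category.id_comp]
          apply biprod.hom_ext'
          · simp
          · simp [reassoc_of% hs]
        by_cases h4 : j = i + 3
        · obtain rfl := h4
          rw [show (i + 3 - 1 : ℤ) = i + 2 from by omega]
          rw [gg_other Y Z i s e e2 (i+3) (by omega) (by omega) (by omega),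
            ff_other Y Z i e e2 (i+3) (by omega) (by omega),
            kZ_ne Y Z i e e2 (i+2) (i+3) (by omega),
            kZ_ne Y Z i e e2 (i+3) (i+3+1) (by omega)]
          simp
        · rw [gg_other Y Z i s e e2 j h1 h2 h3,
            ff_other Y Z i e e2 j h1 h3,
            kZ_ne Y Z i e e2 (j-1) j (by omega),
            kZ_ne Y Z i e e2 j (j+1) (by omega)]
          simp
    }
  }⟩
end

section
/- Let C be an ∞-category with finite colimits, r ≥ 1, and F : [1]^r → C a cubical diagram. For any p ∈ ℕ, the following are equivalent: (1) F is left Kan extended from the subposet of vertices v with ℓ¹-norm |v| ≤ p; (2) every face of F of dimension ≥ p+1 containing the initial vertex is cocartesian; (3) every face of F of dimension exactly p+1 is cocartesian. -/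
open CategoryTheory Limits

universe v u

/-- A two-element poset `{0,1}` (a copy of `Bool`, kept irreducible so that cubes
`α → Two` carry the poset-category structure). -/
def Two : Type := Bool

instance : BooleanAlgebra Two := inferInstanceAs (BooleanAlgebra Bool)
instance : DecidableEq Two := inferInstanceAs (DecidableEq Bool)

attribute [local instance 2000] Preorder.smallCategory

variable {C : Type u} [Category.{v} C]

/-- The canonical cocone on the punctured cube, with apex the terminal vertex. -/
def cubeCocone {α : Type} (G : (α → Two) ⥤ C) :
    Cocone (ObjectProperty.ι (fun v : α → Two => v ≠ ⊤) ⋙ G) where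
  pt := G.obj ⊤
  ι :=
    { app := fun v => G.map (homOfLE le_top)
      naturality := by
        intro u v f
        dsimp
        rw [Category.comp_id, ← G.map_comp]
        exact congrArg G.map (Subsingleton.elim _ _) }

/-- A cube `G : (α → Two) ⥤ C` is cocartesian if its terminal vertex is the colimit of
the punctured cube. -/
def IsCocartesianCube {α : Type} (G : (α → Two) ⥤ C) : Prop :=
  Nonempty (IsColimit (cubeCocone G))

/-- Insertion of a partial vertex: extend `x` defined on `T` by `u` outside `T`. -/
def insFace {r : ℕ} (u : Fin r → Two) (T : Finset (Fin r))
    (x : {s // s ∈ T} → Two) : Fin r → Two :=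
  fun s => if h : s ∈ T then x ⟨s, h⟩ else u s

lemma insFace_monotone {r : ℕ} (u : Fin r → Two) (T : Finset (Fin r)) :
    Monotone (insFace u T) := by
  intro x y hxy s
  dsimp [insFace]
  split
  · exact hxy _
  · exact le_rfl

/-- The face of a cube `F` with free coordinates `T` and base point `u`. -/
def faceFunctor {r : ℕ} (F : (Fin r → Two) ⥤ C) (u : Fin r → Two)
    (T : Finset (Fin r)) : ({s // s ∈ T} → Two) ⥤ C :=
  (insFace_monotone u T).functor ⋙ F

/-- The ℓ¹-norm of a vertex of the cube. -/
def normOf {r : ℕ} (v : Fin r → Two) : ℕ :=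
  (Finset.univ.filter fun s => v s = ⊤).card


/-!
Condition (1) says that every vertex `v` is the colimit of `F` over the vertices of norm `≤ p`
below it. A functor on a subposet `B` that is pointwise left Kan extended from `A ⊆ B` has the
same colimits over `A` and over `B`; applied to `A = {w ≤ v | ‖w‖ ≤ p}` and `B = {w < v}`, this
turns (1), by well-founded induction on `v`, into: every vertex of norm `> p` is the colimit of
the vertices strictly below it, which is (2).

(2) ⇔ (3) rests on the pasting lemma: if a face is split along one of its directions into a
bottom and a top face and the bottom face is cocartesian, then the whole face is cocartesian iff
the top face is. Induction on the base vertex turns (2) into cocartesianness of all faces of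
dimension `≥ p + 1`, and induction on the dimension turns (3) into the same.
-/

instance {J : Type*} [Preorder J] {D : J → Prop} (x y : ObjectProperty.FullSubcategory D) :
    Subsingleton (x ⟶ y) :=
  ⟨fun _ _ => ObjectProperty.hom_ext _ (Subsingleton.elim _ _)⟩

section ColimitBelow

variable {J : Type*} [Preorder J] {G : J ⥤ C}

def coconeBelow (G : J ⥤ C) (D : J → Prop) {v : J} (hD : ∀ w, D w → w ≤ v) :
    Cocone (ObjectProperty.ι D ⋙ G) where
  pt := G.obj v
  ι :=
    { app := fun w => G.map (homOfLE (hD w.1 w.2))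
      naturality := fun _ _ f => by
        dsimp
        rw [Category.comp_id, ← G.map_comp]
        rfl }

def IsColimitBelow (G : J ⥤ C) (D : J → Prop) (v : J) : Prop :=
  ∃ hD : ∀ w, D w → w ≤ v, Nonempty (IsColimit (coconeBelow G D hD))

noncomputable def IsColimitBelow.isColimit {D : J → Prop} {v : J} (h : IsColimitBelow G D v)
    (hD : ∀ w, D w → w ≤ v) : IsColimit (coconeBelow G D hD) :=
  h.2.some

lemma isColimitBelow_congr {A B : J → Prop} {v : J} (h : ∀ w, A w ↔ B w) :
    IsColimitBelow G A v ↔ IsColimitBelow G B v := by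
  obtain rfl : A = B := funext fun w => propext (h w)
  rfl

lemma isColimitBelow_of_mem {D : J → Prop} {v : J} (hD : ∀ w, D w → w ≤ v) (hv : D v) :
    IsColimitBelow G D v := by
  have hterm : IsTerminal (⟨v, hv⟩ : ObjectProperty.FullSubcategory D) :=
    IsTerminal.ofUniqueHom (fun w => ObjectProperty.homMk (homOfLE (hD w.1 w.2)))
      fun _ _ => Subsingleton.elim _ _
  exact ⟨hD, ⟨colimitOfDiagramTerminal hterm _⟩⟩

lemma map_comp_ι_app {D : J → Prop} (c : Cocone (ObjectProperty.ι D ⋙ G)) {a x : J}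
    (ha : D a) (hx : D x) (g : a ⟶ x) : G.map g ≫ c.ι.app ⟨x, hx⟩ = c.ι.app ⟨a, ha⟩ :=
  c.w (ObjectProperty.homMk g : (⟨a, ha⟩ : ObjectProperty.FullSubcategory D) ⟶ ⟨x, hx⟩)

section Extension

variable {A B : J → Prop} (hext : ∀ x, B x → IsColimitBelow G (fun y => A y ∧ y ≤ x) x)
  (s : Cocone (ObjectProperty.ι A ⋙ G))

noncomputable def extendCoconeApp {x : J} (hx : B x) : G.obj x ⟶ s.pt :=
  ((hext x hx).isColimit fun _ h => h.2).desc (s.whisker (ObjectProperty.ιOfLE fun _ h => h.1))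

lemma map_comp_extendCoconeApp {a x : J} (ha : A a) (hx : B x) (g : a ⟶ x) :
    G.map g ≫ extendCoconeApp hext s hx = s.ι.app ⟨a, ha⟩ :=
  ((hext x hx).isColimit fun _ h => h.2).fac _ ⟨a, ha, leOfHom g⟩

noncomputable def extendCocone : Cocone (ObjectProperty.ι B ⋙ G) where
  pt := s.pt
  ι :=
    { app := fun x => extendCoconeApp hext s x.2
      naturality := fun x y f => ((hext x.1 x.2).isColimit fun _ h => h.2).hom_ext fun a => by
        show G.map (homOfLE a.2.2) ≫ G.map f.hom ≫ extendCoconeApp hext s y.2 =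
          G.map (homOfLE a.2.2) ≫ extendCoconeApp hext s x.2 ≫ 𝟙 s.pt
        rw [Category.comp_id, ← G.map_comp_assoc, map_comp_extendCoconeApp hext s a.2.1,
          map_comp_extendCoconeApp hext s a.2.1] }

variable (hAB : A ≤ B) {c : Cocone (ObjectProperty.ι B ⋙ G)}

noncomputable def isColimitWhiskerOfIsColimit (hc : IsColimit c) :
    IsColimit (c.whisker (ObjectProperty.ιOfLE hAB)) where
  desc s := hc.desc (extendCocone hext s)
  fac s a := by
    refine (hc.fac (extendCocone hext s) ⟨a.1, hAB _ a.2⟩).trans ?_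
    have h := map_comp_extendCoconeApp hext s a.2 (hAB _ a.2) (𝟙 a.1)
    rw [G.map_id, Category.id_comp] at h
    exact h
  uniq s m hm := hc.uniq (extendCocone hext s) m fun x =>
    ((hext x.1 x.2).isColimit fun _ h => h.2).hom_ext fun a => by
      show G.map (homOfLE a.2.2) ≫ c.ι.app x ≫ m =
        G.map (homOfLE a.2.2) ≫ extendCoconeApp hext s x.2
      rw [← Category.assoc, map_comp_ι_app c (hAB _ a.2.1),
        map_comp_extendCoconeApp hext s a.2.1]
      exact hm ⟨a.1, a.2.1⟩

def isColimitOfIsColimitWhisker (hc : IsColimit (c.whisker (ObjectProperty.ιOfLE hAB))) :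
    IsColimit c where
  desc s := hc.desc (s.whisker (ObjectProperty.ιOfLE hAB))
  fac s x := ((hext x.1 x.2).isColimit fun _ h => h.2).hom_ext fun a => by
    show G.map (homOfLE a.2.2) ≫ c.ι.app x ≫ hc.desc (s.whisker (ObjectProperty.ιOfLE hAB)) =
      G.map (homOfLE a.2.2) ≫ (s.ι.app x : G.obj x.1 ⟶ s.pt)
    rw [← Category.assoc, map_comp_ι_app c (hAB _ a.2.1), map_comp_ι_app s (hAB _ a.2.1)]
    exact hc.fac _ ⟨a.1, a.2.1⟩
  uniq s m hm := hc.uniq (s.whisker (ObjectProperty.ιOfLE hAB)) m fun a => hm _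

/-- `hext` says that `G` restricted to `B` is the pointwise left Kan extension of its restriction
to `A`. -/
theorem isColimitBelow_iff_of_forall_isColimitBelow
    (hext : ∀ x, B x → IsColimitBelow G (fun y => A y ∧ y ≤ x) x)
    (hAB : A ≤ B) {v : J} (hB : ∀ w, B w → w ≤ v) :
    IsColimitBelow G A v ↔ IsColimitBelow G B v :=
  ⟨fun ⟨_, ⟨h⟩⟩ => ⟨hB, ⟨isColimitOfIsColimitWhisker hext hAB h⟩⟩,
    fun ⟨_, ⟨h⟩⟩ => ⟨fun w hw => hB w (hAB w hw), ⟨isColimitWhiskerOfIsColimit hext hAB h⟩⟩⟩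

end Extension

theorem isColimitBelow_iff_of_final {A B : J → Prop} (hAB : A ≤ B) {v : J}
    (hB : ∀ w, B w → w ≤ v) (hmin : ∀ b, B b → ∃ m, A m ∧ b ≤ m ∧ ∀ w, A w → b ≤ w → m ≤ w) :
    IsColimitBelow G A v ↔ IsColimitBelow G B v := by
  have : (ObjectProperty.ιOfLE hAB).Final := ⟨fun b => by
    obtain ⟨m, hm, hbm, hm_le⟩ := hmin b.1 b.2
    have hinit : IsInitial (StructuredArrow.mk (Y := (⟨m, hm⟩ : ObjectProperty.FullSubcategory A))
        (ObjectProperty.homMk (homOfLE hbm) : b ⟶ (ObjectProperty.ιOfLE hAB).obj ⟨m, hm⟩)) :=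
      IsInitial.ofUniqueHom (fun j : StructuredArrow b (ObjectProperty.ιOfLE hAB) =>
          StructuredArrow.homMk
            (ObjectProperty.homMk (homOfLE (hm_le j.right.1 j.right.2 (leOfHom j.hom.hom))))
            (Subsingleton.elim _ _))
        fun _ _ => StructuredArrow.hom_ext _ _ (Subsingleton.elim _ _)
    exact isConnected_of_isInitial _ hinit⟩
  exact ⟨fun ⟨_, ⟨h⟩⟩ => ⟨hB, ⟨Functor.Final.isColimitWhiskerEquiv (ObjectProperty.ιOfLE hAB) _ h⟩⟩,
    fun ⟨_, ⟨h⟩⟩ => ⟨fun w hw => hB w (hAB w hw),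
      ⟨(Functor.Final.isColimitWhiskerEquiv (ObjectProperty.ιOfLE hAB) _).symm h⟩⟩⟩

end ColimitBelow

section Pointwise

variable {J : Type*} [PartialOrder J] {G : J ⥤ C}

theorem isColimitBelow_le_iff_isColimitBelow_lt {D : J → Prop} {v : J} (hv : ¬ D v)
    (hbelow : ∀ x < v, IsColimitBelow G (fun w => D w ∧ w ≤ x) x) :
    IsColimitBelow G (fun w => D w ∧ w ≤ v) v ↔ IsColimitBelow G (· < v) v :=
  isColimitBelow_iff_of_forall_isColimitBelow
    (fun x hx => (isColimitBelow_congr fun _ =>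
      ⟨fun h => ⟨⟨h.1, h.2.trans hx.le⟩, h.2⟩, fun h => ⟨h.1.1, h.2⟩⟩).1 (hbelow x hx))
    (fun _ h => lt_of_le_of_ne h.2 fun e => hv (e ▸ h.1)) fun _ h => h.le

theorem forall_isColimitBelow_le_iff [WellFoundedLT J] (D : J → Prop) :
    (∀ v, IsColimitBelow G (fun w => D w ∧ w ≤ v) v) ↔
      ∀ v, ¬ D v → IsColimitBelow G (· < v) v := by
  refine ⟨fun h v hv => (isColimitBelow_le_iff_isColimitBelow_lt hv fun x _ => h x).1 (h v),
    fun h v => ?_⟩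
  induction v using WellFoundedLT.induction with
  | _ v ih =>
    by_cases hv : D v
    · exact isColimitBelow_of_mem (fun _ h => h.2) ⟨hv, le_rfl⟩
    · exact (isColimitBelow_le_iff_isColimitBelow_lt hv ih).2 (h v hv)

end Pointwise

section KanExtension

variable {J : Type} [Preorder J]

instance {D : J → Prop} {v : J} (x y : CostructuredArrow (ObjectProperty.ι D) v) :
    Subsingleton (x ⟶ y) :=
  ⟨fun _ _ => CostructuredArrow.hom_ext _ _ (Subsingleton.elim _ _)⟩

def fullSubcategoryLeEquivCostructuredArrow (D : J → Prop) (v : J) :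
    ObjectProperty.FullSubcategory (fun w => D w ∧ w ≤ v) ≌
      CostructuredArrow (ObjectProperty.ι D) v where
  functor :=
    { obj := fun x => CostructuredArrow.mk
        (Y := (⟨x.1, x.2.1⟩ : ObjectProperty.FullSubcategory D)) (homOfLE x.2.2)
      map := fun f =>
        CostructuredArrow.homMk (ObjectProperty.homMk f.hom) (Subsingleton.elim _ _) }
  inverse :=
    { obj := fun g => ⟨g.left.1, g.left.2, leOfHom g.hom⟩
      map := fun f => ObjectProperty.homMk f.left.hom }
  unitIso := NatIso.ofComponents fun _ => Iso.refl _
  counitIso := NatIso.ofComponents fun _ => Iso.refl _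

instance [Finite J] (D : J → Prop) : Finite (ObjectProperty.FullSubcategory D) :=
  Finite.of_injective _ fun _ _ => ObjectProperty.FullSubcategory.ext

instance hasColimitsOfShape_costructuredArrow [Finite J] [HasFiniteColimits C] (D : J → Prop)
    (v : J) : HasColimitsOfShape (CostructuredArrow (ObjectProperty.ι D) v) C :=
  have : Fintype (ObjectProperty.FullSubcategory fun w => D w ∧ w ≤ v) := Fintype.ofFinite _
  hasColimitsOfShape_of_equivalence (fullSubcategoryLeEquivCostructuredArrow D v)

theorem isLeftKanExtension_iff_forall_isColimitBelow [Finite J] [HasFiniteColimits C]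
    (D : J → Prop) (G : J ⥤ C) :
    G.IsLeftKanExtension (𝟙 (ObjectProperty.ι D ⋙ G)) ↔
      ∀ v, IsColimitBelow G (fun w => D w ∧ w ≤ v) v := by
  let E := Functor.LeftExtension.mk G (𝟙 (ObjectProperty.ι D ⋙ G))
  have hcocone v : (E.coconeAt v).whisker (fullSubcategoryLeEquivCostructuredArrow D v).functor ≅
      coconeBelow G (fun w => D w ∧ w ≤ v) (fun _ h => h.2) :=
    Cocone.ext (Iso.refl _) fun _ => (Category.comp_id _).trans (Category.id_comp _)
  have : ∀ v, HasColimit (CostructuredArrow.proj (ObjectProperty.ι D) v ⋙ ObjectProperty.ι D ⋙ G) :=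
    fun v => (hasColimitsOfShape_costructuredArrow D v).has_colimit _
  constructor
  · intro _ v
    exact ⟨fun _ h => h.2,
      ⟨((Functor.isPointwiseLeftKanExtensionOfIsLeftKanExtension G _ v).whiskerEquivalence
        _).ofIsoColimit (hcocone v)⟩⟩
  · intro h
    exact Functor.LeftExtension.IsPointwiseLeftKanExtension.isLeftKanExtension (E := E) fun v =>
      IsColimit.ofWhiskerEquivalence (fullSubcategoryLeEquivCostructuredArrow D v)
        (((h v).isColimit _).ofIsoColimit (hcocone v).symm)

end KanExtension

instance : Fintype Two := inferInstanceAs (Fintype Bool)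

instance : Nontrivial Two := inferInstanceAs (Nontrivial Bool)

lemma Two.eq_bot_of_ne_top {x : Two} (h : x ≠ ⊤) : x = ⊥ :=
  Bool.eq_false_iff.2 h

section Cube

open Function

variable {α : Type*} [DecidableEq α] {G : (α → Two) ⥤ C}

lemma update_top_ne {b v : α → Two} {s : α} (hbv : b ≠ v) (hbv' : b ≠ update v s ⊥) :
    update b s ⊤ ≠ v := by
  intro h
  by_cases hb : b s = ⊤
  · exact hbv (by rwa [← hb, update_eq_self] at h)
  · exact hbv' (by rw [← h, update_idem, ← Two.eq_bot_of_ne_top hb, update_eq_self])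

/-- The pasting lemma for a face `[a, v]` split along the direction `s`: with `v⁻ = update v s ⊥`,
removing `v⁻` from `[a, v)` does not change the colimit since the bottom face `[a, v⁻]` is
cocartesian, and the punctured top face `[update a s ⊤, v)` is final in what is left, via
`b ↦ update b s ⊤`. -/
theorem isColimitBelow_Ico_iff_Ico_update_top {a v : α → Two} {s : α} (hv : v s = ⊤)
    (hbot : IsColimitBelow G (fun w => a ≤ w ∧ w < update v s ⊥) (update v s ⊥)) :
    IsColimitBelow G (fun w => a ≤ w ∧ w < v) v ↔
      IsColimitBelow G (fun w => update a s ⊤ ≤ w ∧ w < v) v := by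
  have hv' : update v s ⊥ ≤ v := update_le_self_iff.2 bot_le
  have hremove : IsColimitBelow G (fun w => a ≤ w ∧ w < v) v ↔
      IsColimitBelow G (fun w => (a ≤ w ∧ w < v) ∧ w ≠ update v s ⊥) v := by
    refine (isColimitBelow_iff_of_forall_isColimitBelow (fun x hx => ?_) (fun _ h => h.1)
      (fun _ h => h.2.le)).symm
    by_cases hx' : x = update v s ⊥
    · subst hx'
      exact (isColimitBelow_congr fun _ => ⟨fun h => ⟨⟨⟨h.1, h.2.trans_le hv'⟩, h.2.ne⟩, h.2.le⟩,
        fun h => ⟨h.1.1.1, lt_of_le_of_ne h.2 h.1.2⟩⟩).1 hbot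
    · exact isColimitBelow_of_mem (fun _ h => h.2) ⟨⟨hx, hx'⟩, le_rfl⟩
  refine hremove.trans (isColimitBelow_iff_of_final ?_ (fun _ h => h.1.2.le) ?_).symm
  · rintro w ⟨haw, hwv⟩
    refine ⟨⟨(le_update_self_iff.2 le_top).trans haw, hwv⟩, ?_⟩
    rintro rfl
    simpa using haw s
  · rintro b ⟨⟨hab, hbv⟩, hbv'⟩
    refine ⟨update b s ⊤, ⟨update_le_update_iff.2 ⟨le_rfl, fun j _ => hab j⟩, ?_⟩,
      le_update_self_iff.2 le_top, ?_⟩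
    · exact lt_of_le_of_ne (update_le_iff.2 ⟨hv.ge, fun j _ => hbv.le j⟩)
        (update_top_ne hbv.ne hbv')
    · rintro w ⟨haw, -⟩ hbw
      exact update_le_iff.2 ⟨by simpa using haw s, fun j _ => hbw j⟩

end Cube

section Faces

open Function

variable {r : ℕ} (u : Fin r → Two) (T : Finset (Fin r))

lemma insFace_of_mem {t : Fin r} (ht : t ∈ T) (x : {s // s ∈ T} → Two) :
    insFace u T x t = x ⟨t, ht⟩ :=
  dif_pos ht

lemma insFace_of_notMem {t : Fin r} (ht : t ∉ T) (x : {s // s ∈ T} → Two) :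
    insFace u T x t = u t :=
  dif_neg ht

lemma insFace_le_insFace_iff {x y : {s // s ∈ T} → Two} :
    insFace u T x ≤ insFace u T y ↔ x ≤ y :=
  ⟨fun h t => by simpa only [insFace_of_mem u T t.2] using h t, fun h => insFace_monotone u T h⟩

lemma insFace_restrict {w : Fin r → Two} (hbot : insFace u T ⊥ ≤ w) (htop : w ≤ insFace u T ⊤) :
    insFace u T (fun t => w t) = w := by
  funext t
  by_cases ht : t ∈ T
  · exact insFace_of_mem u T ht _
  · rw [insFace_of_notMem u T ht]
    exact le_antisymm (by simpa only [insFace_of_notMem u T ht] using hbot t)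
      (by simpa only [insFace_of_notMem u T ht] using htop t)

lemma insFace_congr {u' : Fin r → Two} (h : ∀ t ∉ T, u t = u' t) :
    insFace u T = insFace u' T :=
  funext fun x => funext fun t => by
    by_cases ht : t ∈ T
    · rw [insFace_of_mem u T ht, insFace_of_mem u' T ht]
    · rw [insFace_of_notMem u T ht, insFace_of_notMem u' T ht, h t ht]

lemma insFace_update {s : Fin r} (hs : s ∉ T) (c : Two) (x : {t // t ∈ T} → Two)
    (y : {t // t ∈ insert s T} → Two) (hxy : ∀ t, x t = y ⟨t, Finset.mem_insert_of_mem t.2⟩) :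
    insFace (update u s c) T x = update (insFace u (insert s T) y) s c := by
  funext t
  by_cases hts : t = s
  · subst hts
    rw [insFace_of_notMem _ T hs, update_self, update_self]
  · rw [update_of_ne hts]
    by_cases ht : t ∈ T
    · rw [insFace_of_mem _ T ht, insFace_of_mem _ _ (Finset.mem_insert_of_mem ht), hxy]
    · rw [insFace_of_notMem _ T ht, insFace_of_notMem _ _ (by simp [hts, ht]), update_of_ne hts]

lemma insFace_bot_bot : insFace ⊥ T ⊥ = ⊥ :=
  funext fun t => by
    unfold insFace
    split <;> rfl

lemma insFace_bot_filter_top (v : Fin r → Two) :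
    insFace ⊥ (Finset.univ.filter fun t => v t = ⊤) ⊤ = v := by
  funext t
  by_cases ht : v t = ⊤
  · rw [insFace_of_mem _ _ (by simpa using ht)]
    exact ht.symm
  · rw [insFace_of_notMem _ _ (by simpa using ht), Two.eq_bot_of_ne_top ht]
    rfl

lemma normOf_insFace_bot_top : normOf (insFace ⊥ T ⊤) = T.card := by
  rw [normOf]
  congr 1
  ext t
  by_cases ht : t ∈ T
  · simp [ht, insFace_of_mem _ _ ht]
  · simp [ht, insFace_of_notMem _ _ ht]

def puncturedFaceEquiv :
    ObjectProperty.FullSubcategory (fun x : {s // s ∈ T} → Two => x ≠ ⊤) ≌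
      ObjectProperty.FullSubcategory
        (fun w : Fin r → Two => insFace u T ⊥ ≤ w ∧ w < insFace u T ⊤) where
  functor :=
    { obj := fun x => ⟨insFace u T x.1, insFace_monotone u T bot_le,
        (insFace_monotone u T le_top).lt_of_ne fun h =>
          x.2 (top_le_iff.1 ((insFace_le_insFace_iff u T).1 h.ge))⟩
      map := fun f => ObjectProperty.homMk (homOfLE (insFace_monotone u T (leOfHom f.hom))) }
  inverse :=
    { obj := fun w => ⟨fun t => w.1 t, fun h =>
        w.2.2.ne (by rw [← insFace_restrict u T w.2.1 w.2.2.le, h])⟩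
      map := fun f => ObjectProperty.homMk (homOfLE fun t => leOfHom f.hom t) }
  unitIso := NatIso.ofComponents fun x => eqToIso (ObjectProperty.FullSubcategory.ext
    (funext fun t => (insFace_of_mem u T t.2 x.1).symm))
  counitIso := NatIso.ofComponents fun w => eqToIso (ObjectProperty.FullSubcategory.ext
    (insFace_restrict u T w.2.1 w.2.2.le))

variable (F : (Fin r → Two) ⥤ C)

theorem isCocartesianCube_faceFunctor_iff :
    IsCocartesianCube (faceFunctor F u T) ↔
      IsColimitBelow F (fun w => insFace u T ⊥ ≤ w ∧ w < insFace u T ⊤) (insFace u T ⊤) :=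
  ⟨fun ⟨h⟩ => ⟨fun _ h => h.2.le, ⟨IsColimit.ofWhiskerEquivalence (puncturedFaceEquiv u T) h⟩⟩,
    fun ⟨_, ⟨h⟩⟩ => ⟨h.whiskerEquivalence (puncturedFaceEquiv u T)⟩⟩

theorem isCocartesianCube_faceFunctor_congr {u' : Fin r → Two} (h : ∀ t ∉ T, u t = u' t) :
    IsCocartesianCube (faceFunctor F u T) ↔ IsCocartesianCube (faceFunctor F u' T) := by
  rw [isCocartesianCube_faceFunctor_iff, isCocartesianCube_faceFunctor_iff, insFace_congr u T h]

theorem isCocartesianCube_faceFunctor_bot_iff :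
    IsCocartesianCube (faceFunctor F ⊥ T) ↔
      IsColimitBelow F (· < insFace ⊥ T ⊤) (insFace ⊥ T ⊤) := by
  rw [isCocartesianCube_faceFunctor_iff, insFace_bot_bot]
  exact isColimitBelow_congr fun _ => ⟨fun h => h.2, fun h => ⟨bot_le, h⟩⟩

theorem isCocartesianCube_faceFunctor_insert_iff {s : Fin r} (hs : s ∉ T)
    (hbot : IsCocartesianCube (faceFunctor F (update u s ⊥) T)) :
    IsCocartesianCube (faceFunctor F u (insert s T)) ↔
      IsCocartesianCube (faceFunctor F (update u s ⊤) T) := by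
  have hbot_corner c := insFace_update u T hs c ⊥ ⊥ fun _ => rfl
  have htop_corner c := insFace_update u T hs c ⊤ ⊤ fun _ => rfl
  have hv : insFace u (insert s T) ⊤ s = ⊤ := insFace_of_mem u _ (Finset.mem_insert_self s T) ⊤
  have hbot_fixed : update (insFace u (insert s T) ⊥) s ⊥ = insFace u (insert s T) ⊥ :=
    update_eq_self_iff.2 (insFace_of_mem u _ (Finset.mem_insert_self s T) ⊥).symm
  have htop_fixed : update (insFace u (insert s T) ⊤) s ⊤ = insFace u (insert s T) ⊤ :=
    update_eq_self_iff.2 hv.symm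
  rw [isCocartesianCube_faceFunctor_iff, hbot_corner, htop_corner, hbot_fixed] at hbot
  rw [isCocartesianCube_faceFunctor_iff, isCocartesianCube_faceFunctor_iff, hbot_corner,
    htop_corner, htop_fixed]
  exact isColimitBelow_Ico_iff_Ico_update_top hv hbot

end Faces

section FaceConditions

open Function

variable {r : ℕ} (F : (Fin r → Two) ⥤ C) (p : ℕ)

theorem isCocartesianCube_faceFunctor_of_bot
    (h : ∀ T : Finset (Fin r), p + 1 ≤ T.card → IsCocartesianCube (faceFunctor F ⊥ T))
    (u : Fin r → Two) (T : Finset (Fin r)) (hT : p + 1 ≤ T.card) :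
    IsCocartesianCube (faceFunctor F u T) := by
  induction u using WellFoundedLT.induction generalizing T with
  | _ u ih =>
    by_cases hu : ∃ s ∉ T, u s = ⊤
    · obtain ⟨s, hs, hus⟩ := hu
      have hlt : update u s ⊥ < u := update_lt_self_iff.2 (hus ▸ bot_lt_top)
      have hbot : IsCocartesianCube (faceFunctor F (update (update u s ⊥) s ⊥) T) := by
        rw [update_idem]
        exact ih _ hlt T hT
      have hup : update (update u s ⊥) s ⊤ = u := by
        rw [update_idem, update_eq_self_iff.2 hus.symm]
      rw [← hup]
      exact (isCocartesianCube_faceFunctor_insert_iff _ T F hs hbot).1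
        (ih _ hlt _ (hT.trans (Finset.card_le_card (Finset.subset_insert s T))))
    · push Not at hu
      exact (isCocartesianCube_faceFunctor_congr u T F fun t ht =>
        Two.eq_bot_of_ne_top (hu t ht)).2 (h T hT)

theorem isCocartesianCube_faceFunctor_of_card_eq
    (h : ∀ (u : Fin r → Two) (T : Finset (Fin r)), T.card = p + 1 →
      IsCocartesianCube (faceFunctor F u T))
    (u : Fin r → Two) (T : Finset (Fin r)) (hT : p + 1 ≤ T.card) :
    IsCocartesianCube (faceFunctor F u T) := by
  obtain ⟨n, hn, hTn⟩ : ∃ n, p + 1 ≤ n ∧ T.card = n := ⟨_, hT, rfl⟩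
  clear hT
  induction n, hn using Nat.le_induction generalizing u T with
  | base => exact h u T hTn
  | succ n _ ih =>
    obtain ⟨s, T, hs, rfl, hcard⟩ := Finset.card_eq_succ.1 hTn
    exact (isCocartesianCube_faceFunctor_insert_iff u T F hs (ih _ _ hcard)).2 (ih _ _ hcard)

theorem isLeftKanExtension_iff_isCocartesianCube_faceFunctor_bot [HasFiniteColimits C] :
    F.IsLeftKanExtension (𝟙 (ObjectProperty.ι (fun v : Fin r → Two => normOf v ≤ p) ⋙ F)) ↔
      ∀ T : Finset (Fin r), p + 1 ≤ T.card → IsCocartesianCube (faceFunctor F ⊥ T) := by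
  simp only [isLeftKanExtension_iff_forall_isColimitBelow, forall_isColimitBelow_le_iff,
    isCocartesianCube_faceFunctor_bot_iff, not_le]
  refine ⟨fun h T hT => h _ (by rwa [normOf_insFace_bot_top]), fun h v hv => ?_⟩
  rw [← insFace_bot_filter_top v]
  exact h _ hv

end FaceConditions

theorem stmt10_general {r : ℕ} [HasFiniteColimits C]
    (F : (Fin r → Two) ⥤ C) (p : ℕ) :
    ((F.IsLeftKanExtension
        (𝟙 (ObjectProperty.ι (fun v : Fin r → Two => normOf v ≤ p) ⋙ F))) ↔
      (∀ T : Finset (Fin r), p + 1 ≤ T.card →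
        IsCocartesianCube (faceFunctor F (fun _ => (⊥ : Two)) T))) ∧
    ((∀ T : Finset (Fin r), p + 1 ≤ T.card →
        IsCocartesianCube (faceFunctor F (fun _ => (⊥ : Two)) T)) ↔
      (∀ (u : Fin r → Two) (T : Finset (Fin r)), T.card = p + 1 →
        IsCocartesianCube (faceFunctor F u T))) :=
  ⟨isLeftKanExtension_iff_isCocartesianCube_faceFunctor_bot F p,
    fun h u T hT => isCocartesianCube_faceFunctor_of_bot F p h u T hT.ge,
    fun h T hT => isCocartesianCube_faceFunctor_of_card_eq F p h ⊥ T hT⟩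

/-- For a cube `F : [1]^r → C` in a category with finite colimits and `p ∈ ℕ`, the following
are equivalent: (1) `F` is left Kan extended from vertices of norm `≤ p`; (2) every face of
dimension `≥ p+1` containing the initial vertex is cocartesian; (3) every face of dimension
exactly `p+1` is cocartesian. -/
theorem stmt10 {r : ℕ} (hr : 1 ≤ r) [HasFiniteColimits C]
    (F : (Fin r → Two) ⥤ C) (p : ℕ) :
    ((F.IsLeftKanExtension
        (𝟙 (ObjectProperty.ι (fun v : Fin r → Two => normOf v ≤ p) ⋙ F))) ↔
      (∀ T : Finset (Fin r), p + 1 ≤ T.card →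
        IsCocartesianCube (faceFunctor F (fun _ => (⊥ : Two)) T))) ∧
    ((∀ T : Finset (Fin r), p + 1 ≤ T.card →
        IsCocartesianCube (faceFunctor F (fun _ => (⊥ : Two)) T)) ↔
      (∀ (u : Fin r → Two) (T : Finset (Fin r)), T.card = p + 1 →
        IsCocartesianCube (faceFunctor F u T))) :=
  stmt10_general F p
end

section
/- Let S be a finite set, a ≥ 1, C an ∞-category with finite colimits, and X : [a]^S → C a diagram. The following are equivalent: (1) X is left Kan extended from the full subposet of functions supported on at most one element of S; (2) for each collection of strictly monotone maps f_s : [1] → [a] with f_s(0) = 0 for all s ∈ S, the restricted cube [1]^S → [a]^S → C is strongly cocartesian; (3) for each collection of strictly monotone maps f_s : [1] → [a] (no basepoint condition), the restricted cube [1]^S → [a]^S → C is strongly cocartesian. -/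
open CategoryTheory Limits

universe v u

/-- The linearly ordered set `[a] = {0, …, a}` (a copy of `Fin (a+1)`). -/
def Vert (a : ℕ) : Type := Fin (a + 1)

instance (a : ℕ) : LinearOrder (Vert a) := inferInstanceAs (LinearOrder (Fin (a + 1)))
instance (a : ℕ) : Zero (Vert a) := inferInstanceAs (Zero (Fin (a + 1)))
instance (a : ℕ) : DecidableEq (Vert a) := inferInstanceAs (DecidableEq (Fin (a + 1)))

attribute [local instance 2000] Preorder.smallCategory

variable {C : Type u} [Category.{v} C]

lemma le_update_true {S : Type} [DecidableEq S] (u : S → Two) (s : S) :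
    u ≤ Function.update u s ⊤ := by
  intro x
  by_cases h : x = s
  · subst h; simp
  · simp [Function.update_of_ne h]

lemma update_true_le_update_true {S : Type} [DecidableEq S] (u v : S → Two) (huv : u ≤ v)
    (s : S) : Function.update u s ⊤ ≤ Function.update v s ⊤ := by
  intro x
  by_cases h : x = s
  · subst h; simp
  · simpa [Function.update_of_ne h] using huv x

/-- A cube `G : (S → Two) ⥤ C` is strongly cocartesian if all of its 2-dimensional faces
are pushout squares. -/
def IsStronglyCocartesianCube {S : Type} [DecidableEq S] (G : (S → Two) ⥤ C) : Prop :=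
  ∀ (u : S → Two) (s t : S), s ≠ t → u s = ⊥ → u t = ⊥ →
    IsPushout (G.map (homOfLE (le_update_true u s)))
      (G.map (homOfLE (le_update_true u t)))
      (G.map (homOfLE (le_update_true (Function.update u s ⊤) t)))
      (G.map (homOfLE
        (update_true_le_update_true u (Function.update u s ⊤) (le_update_true u s) t)))

/-- Selection map: restrict a cube of sidelength `a` along the monotone maps
`[1] → [a]` sending `0 ↦ x s` and `1 ↦ y s` in each coordinate. -/
def selMap {S : Type} {a : ℕ} (x y : S → Vert a) (v : S → Two) : S → Vert a :=
  fun s => if v s = ⊤ then y s else x s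

lemma selMap_monotone {S : Type} {a : ℕ} (x y : S → Vert a) (h : ∀ s, x s ≤ y s) :
    Monotone (selMap x y) := by
  intro v w hvw s
  dsimp [selMap]
  by_cases hv : v s = ⊤
  · have hw : w s = ⊤ := top_le_iff.mp (hv ▸ hvw s)
    simp [hv, hw]
  · by_cases hw : w s = ⊤ <;> simp [hv, hw, h s]

/-- The cube of sidelength 1 obtained from `X : [a]^S → C` by restricting along the strictly
monotone maps `[1] → [a]`, `0 ↦ x s`, `1 ↦ y s`. -/
def restrictedCube {S : Type} {a : ℕ} (X : (S → Vert a) ⥤ C) (x y : S → Vert a)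
    (h : ∀ s, x s ≤ y s) : (S → Two) ⥤ C :=
  (selMap_monotone x y h).functor ⋙ X

/-! Write `D` for the functions `S → [a]` supported on at most one element. For `g` with
`g t ≠ 0`, the points of `D` below `g` are those below `update g t 0` together with those below
`Pi.single t (g t)`, and the two families meet only in `0`. So if `X` is a pointwise left Kan
extension of its restriction to `D` at `update g t 0`, it is one at `g` exactly when the star
square `0 ⟶ Pi.single t (g t), update g t 0 ⟶ g` is sent to a pushout.

Pasting along the support of `g` builds every star square out of faces of `X` spanned by two
directions `s ≠ t` whose corner has coordinates `0` at `s` and `t`; conversely, such a based face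
square is what is left of a star square after cancelling a smaller star square. By induction on
`g`, (1) therefore holds iff all based face squares are pushouts, and these are the faces of the
cubes in (2) (up to degenerate ones). Cancelling based face squares yields all face squares, and
the faces of the cubes in (3) are face squares, so (2) ⇒ (3); (3) ⇒ (2) is the case `x = 0`. -/

open Function

section PreorderSquares

variable {P : Type*} [Preorder P] (X : P ⥤ C)

lemma map_homOfLE_comp {A B D : P} (h : A ≤ B) (k : B ≤ D) :
    X.map (homOfLE h) ≫ X.map (homOfLE k) = X.map (homOfLE (h.trans k)) := by
  rw [← X.map_comp, homOfLE_comp]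

lemma map_homOfLE_comp_assoc {A B D : P} (h : A ≤ B) (k : B ≤ D) {W : C} (m : X.obj D ⟶ W) :
    X.map (homOfLE h) ≫ X.map (homOfLE k) ≫ m = X.map (homOfLE (h.trans k)) ≫ m := by
  rw [← Category.assoc, map_homOfLE_comp]

def SquareIsPushout (A B D E : P) : Prop :=
  ∃ (hAB : A ≤ B) (hAD : A ≤ D) (hBE : B ≤ E) (hDE : D ≤ E),
    IsPushout (X.map (homOfLE hAB)) (X.map (homOfLE hAD)) (X.map (homOfLE hBE))
      (X.map (homOfLE hDE))

variable {X}

namespace SquareIsPushout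

lemma isPushout {A B D E : P} (h : SquareIsPushout X A B D E)
    (hAB : A ≤ B) (hAD : A ≤ D) (hBE : B ≤ E) (hDE : D ≤ E) :
    IsPushout (X.map (homOfLE hAB)) (X.map (homOfLE hAD)) (X.map (homOfLE hBE))
      (X.map (homOfLE hDE)) := by
  obtain ⟨_, _, _, _, h⟩ := h
  exact h

lemma flip {A B D E : P} (h : SquareIsPushout X A B D E) : SquareIsPushout X A D B E := by
  obtain ⟨hAB, hAD, hBE, hDE, h⟩ := h
  exact ⟨hAD, hAB, hDE, hBE, h.flip⟩

lemma of_horiz_refl {A D : P} (hAD : A ≤ D) : SquareIsPushout X A A D D := by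
  refine ⟨le_rfl, hAD, hAD, le_rfl, ?_⟩
  simp only [homOfLE_refl, X.map_id]
  exact IsPushout.of_horiz_isIso ⟨by simp⟩

lemma of_vert_refl {A B : P} (hAB : A ≤ B) : SquareIsPushout X A B A B :=
  (of_horiz_refl hAB).flip

lemma paste_vert {A B D E F G : P} (top : SquareIsPushout X A B D E)
    (bot : SquareIsPushout X D E F G) : SquareIsPushout X A B F G := by
  obtain ⟨hAB, hAD, hBE, _, top⟩ := top
  obtain ⟨_, hDF, hEG, hFG, bot⟩ := bot
  refine ⟨hAB, hAD.trans hDF, hBE.trans hEG, hFG, ?_⟩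
  simpa only [map_homOfLE_comp] using top.paste_vert bot

lemma of_top {A B D E F G : P} (big : SquareIsPushout X A B F G)
    (top : SquareIsPushout X A B D E) (hDF : D ≤ F) (hEG : E ≤ G) :
    SquareIsPushout X D E F G := by
  obtain ⟨_, _, _, hFG, big⟩ := big
  obtain ⟨_, _, _, hDE, top⟩ := top
  refine ⟨hDE, hDF, hEG, hFG, IsPushout.of_top ?_ ?_ top⟩
  · simpa only [map_homOfLE_comp] using big
  · simp only [map_homOfLE_comp]

lemma of_left {A B B' D E E' : P} (big : SquareIsPushout X A B' D E')
    (left : SquareIsPushout X A B D E) (hBB' : B ≤ B') (hEE' : E ≤ E') :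
    SquareIsPushout X B B' E E' :=
  (big.flip.of_top left.flip hBB' hEE').flip

end SquareIsPushout

end PreorderSquares

section Vert

variable {a : ℕ}

instance : Fintype (Vert a) := inferInstanceAs (Fintype (Fin (a + 1)))

instance : WellFoundedLT (Vert a) := inferInstanceAs (WellFoundedLT (Fin (a + 1)))

lemma Vert.zero_le (x : Vert a) : 0 ≤ x := Fin.zero_le (show Fin (a + 1) from x)

lemma Vert.zero_le_pi {S : Type} (g : S → Vert a) : 0 ≤ g := fun _ => Vert.zero_le _

end Vert

section Faces

variable {S : Type} [DecidableEq S] {P : Type*}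

def faceVertex (c : S → P) (s t : S) (i j : P) : S → P := update (update c s i) t j

variable {c : S → P} {s t : S}

lemma faceVertex_mono [Preorder P] {i i' j j' : P} (hi : i ≤ i') (hj : j ≤ j') :
    faceVertex c s t i j ≤ faceVertex c s t i' j' := by
  intro r
  simp only [faceVertex, update_apply]
  split_ifs
  exacts [hj, hi, le_rfl]

lemma faceVertex_faceVertex (i j i' j' : P) :
    faceVertex (faceVertex c s t i j) s t i' j' = faceVertex c s t i' j' := by
  funext r
  simp only [faceVertex, update_apply]
  split_ifs <;> simp_all

lemma faceVertex_self (p q : P) (hp : c s = p) (hq : c t = q) : faceVertex c s t p q = c := by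
  subst hp hq
  simp [faceVertex]

lemma faceVertex_of_right_eq (hst : s ≠ t) (p q : P) (hq : c t = q) :
    faceVertex c s t p q = update c s p := by
  subst hq
  simp [faceVertex, update_of_ne hst.symm]

lemma faceVertex_of_left_eq (p q : P) (hp : c s = p) : faceVertex c s t p q = update c t q := by
  subst hp
  simp [faceVertex]

lemma faceVertex_apply_right (i j : P) : faceVertex c s t i j t = j := update_self _ _ _

lemma update_faceVertex_right (i j k : P) :
    update (faceVertex c s t i j) t k = faceVertex c s t i k :=
  update_idem _ _ _

end Faces

section FaceSquares

variable {S : Type} [DecidableEq S] {a : ℕ} (X : (S → Vert a) ⥤ C)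

def FaceIsPushout (c : S → Vert a) (s t : S) (i p j q : Vert a) : Prop :=
  SquareIsPushout X (faceVertex c s t i j) (faceVertex c s t p j) (faceVertex c s t i q)
    (faceVertex c s t p q)

def FacesArePushouts : Prop :=
  ∀ (c : S → Vert a) (s t : S), s ≠ t → ∀ i p j q : Vert a, i ≤ p → j ≤ q →
    FaceIsPushout X c s t i p j q

def BasedFacesArePushouts : Prop :=
  ∀ (c : S → Vert a) (s t : S), s ≠ t → ∀ p q : Vert a, 0 < p → 0 < q →
    FaceIsPushout X c s t 0 p 0 q

variable {X}

lemma faceIsPushout_faceVertex {c : S → Vert a} {s t : S} (i' j' i p j q : Vert a) :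
    FaceIsPushout X (faceVertex c s t i' j') s t i p j q ↔ FaceIsPushout X c s t i p j q := by
  simp only [FaceIsPushout, faceVertex_faceVertex]

lemma faceIsPushout_iff {c : S → Vert a} {s t : S} (hst : s ≠ t) {i j : Vert a} (p q : Vert a)
    (hi : c s = i) (hj : c t = j) :
    FaceIsPushout X c s t i p j q ↔
      SquareIsPushout X c (update c s p) (update c t q) (update (update c s p) t q) := by
  rw [FaceIsPushout, faceVertex_self i j hi hj, faceVertex_of_right_eq hst p j hj,
    faceVertex_of_left_eq i q hi]
  rfl

lemma BasedFacesArePushouts.faceIsPushout (h : BasedFacesArePushouts X) {c : S → Vert a}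
    {s t : S} (hst : s ≠ t) (p q : Vert a) : FaceIsPushout X c s t 0 p 0 q := by
  rcases (Vert.zero_le p).eq_or_lt with rfl | hp
  · exact .of_horiz_refl (faceVertex_mono le_rfl (Vert.zero_le q))
  rcases (Vert.zero_le q).eq_or_lt with rfl | hq
  · exact .of_vert_refl (faceVertex_mono (Vert.zero_le p) le_rfl)
  exact h c s t hst p q hp hq

/-- Cancel the based square up to height `j` in direction `t`, then the based square up to
`i` in direction `s`. -/
lemma BasedFacesArePushouts.facesArePushouts (h : BasedFacesArePushouts X) :
    FacesArePushouts X := by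
  intro c s t hst i p j q hip hjq
  have from_zero (k : Vert a) : FaceIsPushout X c s t 0 k j q :=
    (h.faceIsPushout hst k q).of_top (h.faceIsPushout hst k j)
      (faceVertex_mono le_rfl hjq) (faceVertex_mono le_rfl hjq)
  exact (from_zero p).of_left (from_zero i) (faceVertex_mono hip le_rfl)
    (faceVertex_mono hip le_rfl)

end FaceSquares

section Cubes

variable {S : Type} {a : ℕ}

lemma selMap_of_eq_bot {x y : S → Vert a} {u : S → Two} {s : S} (hs : u s = ⊥) :
    selMap x y u s = x s := by
  simp [selMap, hs, show (⊥ : Two) ≠ ⊤ by decide]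

variable [DecidableEq S]

lemma selMap_update_top (x y : S → Vert a) (u : S → Two) (s : S) :
    selMap x y (update u s ⊤) = update (selMap x y u) s (y s) := by
  funext r
  by_cases hr : r = s
  · subst hr
    simp [selMap]
  · simp [selMap, update_of_ne hr]

variable (X : (S → Vert a) ⥤ C)

lemma isStronglyCocartesianCube_restrictedCube_iff (x y : S → Vert a) (h : ∀ s, x s ≤ y s) :
    IsStronglyCocartesianCube (restrictedCube X x y h) ↔
      ∀ (u : S → Two) (s t : S), s ≠ t → u s = ⊥ → u t = ⊥ →
        FaceIsPushout X (selMap x y u) s t (x s) (y s) (x t) (y t) := by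
  refine forall₄_congr fun u s t hst => forall₂_congr fun hs ht => ?_
  rw [faceIsPushout_iff hst _ _ (selMap_of_eq_bot hs) (selMap_of_eq_bot ht),
    ← selMap_update_top, ← selMap_update_top, ← selMap_update_top]
  exact ⟨fun h => ⟨_, _, _, _, h⟩, fun h => h.isPushout _ _ _ _⟩

variable {X}

lemma FacesArePushouts.isStronglyCocartesianCube (h : FacesArePushouts X) (x y : S → Vert a)
    (hlt : ∀ s, x s < y s) :
    IsStronglyCocartesianCube (restrictedCube X x y (fun s => (hlt s).le)) :=
  (isStronglyCocartesianCube_restrictedCube_iff X x y _).2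
    fun _ s t hst _ _ => h _ s t hst _ _ _ _ (hlt s).le (hlt t).le

/-- The based face square through `c₀ = faceVertex c s t 0 0` is a face of the cube that, in
each direction `r ≠ s, t`, selects `c₀ r` at the vertex `1` when `c₀ r ≠ 0` and `0` otherwise. -/
lemma basedFacesArePushouts_of_isStronglyCocartesianCube
    (H : ∀ (y : S → Vert a) (hy : ∀ s, 0 < y s),
      IsStronglyCocartesianCube (restrictedCube X (fun _ => 0) y (fun s => (hy s).le))) :
    BasedFacesArePushouts X := by
  intro c s t hst p q hp hq
  rw [← faceIsPushout_faceVertex 0 0]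
  set c₀ := faceVertex c s t 0 0
  have hc₀s : c₀ s = 0 := by simp [c₀, faceVertex, update_of_ne hst]
  have hc₀t : c₀ t = 0 := by simp [c₀, faceVertex]
  let y := faceVertex (fun r => if c₀ r = 0 then p else c₀ r) s t p q
  let u : S → Two := fun r => if c₀ r = 0 then ⊥ else ⊤
  have hy : ∀ r, 0 < y r := by
    intro r
    simp only [y, faceVertex, update_apply]
    split_ifs with h₁ h₂ h₃
    exacts [hq, hp, hp, (Vert.zero_le _).lt_of_ne' h₃]
  have hsel : selMap (fun _ => 0) y u = c₀ := by
    funext r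
    by_cases hr : c₀ r = 0
    · simp [selMap, u, hr, show (⊥ : Two) ≠ ⊤ by decide]
    · have hrs : r ≠ s := by rintro rfl; exact hr hc₀s
      have hrt : r ≠ t := by rintro rfl; exact hr hc₀t
      simp [selMap, u, y, faceVertex, hr, update_of_ne hrs, update_of_ne hrt]
  have hface := (isStronglyCocartesianCube_restrictedCube_iff X _ y _).1 (H y hy) u s t hst
    (by simp [u, hc₀s]) (by simp [u, hc₀t])
  rwa [hsel, show y s = p by simp [y, faceVertex, update_of_ne hst],
    show y t = q by simp [y, faceVertex]] at hface

end Cubes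

section Support

variable {S : Type} {a : ℕ}

abbrev atMostOneSupport : ObjectProperty (S → Vert a) :=
  fun g => ∀ s t : S, g s ≠ 0 → g t ≠ 0 → s = t

lemma atMostOneSupport_zero : atMostOneSupport (0 : S → Vert a) := fun _ _ hs => absurd rfl hs

variable [DecidableEq S]

lemma atMostOneSupport_single (t : S) (k : Vert a) : atMostOneSupport (Pi.single t k) := by
  have hsupp : ∀ r, (Pi.single t k : S → Vert a) r ≠ 0 → r = t := fun r hr =>
    by_contra fun hrt => hr (by simp [hrt])
  exact fun r r' hr hr' => (hsupp r hr).trans (hsupp r' hr').symm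

variable {g : S → Vert a} {t : S}

lemma update_zero_le (g : S → Vert a) (t : S) : update g t 0 ≤ g :=
  update_le_iff.2 ⟨Vert.zero_le _, fun _ _ => le_rfl⟩

lemma update_zero_lt (ht : g t ≠ 0) : update g t 0 < g :=
  (update_zero_le g t).lt_of_ne fun h => ht (by simpa using (congrFun h t).symm)

lemma single_le (g : S → Vert a) (t : S) : Pi.single t (g t) ≤ g :=
  update_le_iff.2 ⟨le_rfl, fun _ _ => Vert.zero_le _⟩

lemma le_update_zero_of_apply_eq_zero {h : S → Vert a} (hle : h ≤ g) (ht : h t = 0) :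
    h ≤ update g t 0 :=
  le_update_iff.2 ⟨ht.le, fun r _ => hle r⟩

lemma le_single_of_atMostOneSupport {h : S → Vert a} (hh : atMostOneSupport h) (hle : h ≤ g)
    (ht : h t ≠ 0) : h ≤ Pi.single t (g t) :=
  le_update_iff.2 ⟨hle t, fun r hr => (by_contra fun hr0 => hr (hh r t hr0 ht) : h r = 0).le⟩

lemma le_zero_of_le_single {h : S → Vert a} {k : Vert a} (hle : h ≤ Pi.single t k)
    (ht : h t = 0) : h ≤ 0 := by
  intro r
  by_cases hr : r = t
  · subst hr; exact ht.le
  · simpa [hr] using hle r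

end Support

section PointsBelow

variable {S : Type} {a : ℕ}

instance (g : S → Vert a) :
    Quiver.IsThin (CostructuredArrow (atMostOneSupport (S := S) (a := a)).ι g) :=
  fun _ _ => ⟨fun _ _ =>
    CostructuredArrow.hom_ext _ _ (ObjectProperty.hom_ext _ (Subsingleton.elim _ _))⟩

variable [Fintype S] [DecidableEq S]

noncomputable instance (g : S → Vert a) :
    Fintype (CostructuredArrow (atMostOneSupport (S := S) (a := a)).ι g) :=
  Fintype.ofInjective (fun j => j.left.obj) fun j j' e => by
    obtain ⟨⟨h, hh⟩, ⟨⟨⟩⟩, hle⟩ := j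
    obtain ⟨⟨h', hh'⟩, ⟨⟨⟩⟩, hle'⟩ := j'
    obtain rfl : h = h' := e
    congr
    exact Subsingleton.elim _ _

instance [HasFiniteColimits C] (X : (S → Vert a) ⥤ C) :
    (atMostOneSupport (S := S) (a := a)).ι.HasPointwiseLeftKanExtension
      (atMostOneSupport.ι ⋙ X) :=
  fun g => (hasColimitsOfShape_of_hasFiniteColimits (C := C) (J :=
    CostructuredArrow (atMostOneSupport (S := S) (a := a)).ι g)).has_colimit _

end PointsBelow

section SelfExtension

variable {S : Type} {a : ℕ} (X : (S → Vert a) ⥤ C)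

abbrev selfExtension :
    Functor.LeftExtension (atMostOneSupport (S := S) (a := a)).ι (atMostOneSupport.ι ⋙ X) :=
  .mk X (𝟙 _)

lemma selfExtension_coconeAt_ι_app (g : S → Vert a)
    (j : CostructuredArrow (atMostOneSupport (S := S) (a := a)).ι g) :
    ((selfExtension X).coconeAt g).ι.app j = X.map j.hom :=
  Category.id_comp _

/-- Since `f` is a map out of `X.obj g`, rewriting with this lemma leaves a composite between
objects that are reducibly of the form `X.obj _`, on which further rewriting works. -/
lemma selfExtension_coconeAt_ι_app_comp (g : S → Vert a)
    (j : CostructuredArrow (atMostOneSupport (S := S) (a := a)).ι g) {W : C} (f : X.obj g ⟶ W) :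
    ((selfExtension X).coconeAt g).ι.app j ≫ f = X.map j.hom ≫ f := by
  rw [selfExtension_coconeAt_ι_app]
  rfl

variable {X}

lemma selfExtension_fac {g : S → Vert a} (hg : IsColimit ((selfExtension X).coconeAt g))
    (c : Cocone (CostructuredArrow.proj (atMostOneSupport (S := S) (a := a)).ι g ⋙
      atMostOneSupport.ι ⋙ X))
    (j : CostructuredArrow (atMostOneSupport (S := S) (a := a)).ι g) :
    X.map j.hom ≫ (hg.desc c : X.obj g ⟶ c.pt) = c.ι.app j :=
  (selfExtension_coconeAt_ι_app_comp X g j _).symm.trans (hg.fac c j)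

lemma selfExtension_hom_ext {g : S → Vert a} (hg : IsColimit ((selfExtension X).coconeAt g))
    {W : C} {f f' : X.obj g ⟶ W}
    (h : ∀ j : CostructuredArrow (atMostOneSupport (S := S) (a := a)).ι g,
      X.map j.hom ≫ f = X.map j.hom ≫ f') : f = f' :=
  hg.hom_ext fun j => (selfExtension_coconeAt_ι_app_comp X g j f).trans
    ((h j).trans (selfExtension_coconeAt_ι_app_comp X g j f').symm)

def belowMk {g : S → Vert a} (h : S → Vert a) (hh : atMostOneSupport h) (hle : h ≤ g) :
    CostructuredArrow (atMostOneSupport (S := S) (a := a)).ι g :=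
  CostructuredArrow.mk (Y := ⟨h, hh⟩) (homOfLE hle : atMostOneSupport.ι.obj ⟨h, hh⟩ ⟶ g)

def belowHomOfLE {g : S → Vert a}
    {j j' : CostructuredArrow (atMostOneSupport (S := S) (a := a)).ι g}
    (h : j.left.obj ≤ j'.left.obj) : j ⟶ j' :=
  CostructuredArrow.homMk (ObjectProperty.homMk (homOfLE h)) (Subsingleton.elim _ _)

abbrev restrictCocone {g g' : S → Vert a} (hle : g' ≤ g)
    (c : Cocone (CostructuredArrow.proj (atMostOneSupport (S := S) (a := a)).ι g ⋙
      atMostOneSupport.ι ⋙ X)) :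
    Cocone (CostructuredArrow.proj (atMostOneSupport (S := S) (a := a)).ι g' ⋙
      atMostOneSupport.ι ⋙ X) :=
  (c.whisker (CostructuredArrow.map (homOfLE hle)) :)

variable (X) in
noncomputable def isColimitCoconeAtOfAtMostOneSupport {g : S → Vert a}
    (hg : atMostOneSupport g) : IsColimit ((selfExtension X).coconeAt g) where
  desc c := c.ι.app (belowMk g hg le_rfl)
  fac c j := by
    rw [selfExtension_coconeAt_ι_app]
    exact c.w (belowHomOfLE (j' := belowMk g hg le_rfl) (leOfHom j.hom))
  uniq c m hm := by
    have h := (selfExtension_coconeAt_ι_app_comp X g (belowMk g hg le_rfl) m).symm.trans (hm _)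
    change X.map (𝟙 g) ≫ m = _ at h
    rw [X.map_id] at h
    exact (Category.id_comp m).symm.trans h

end SelfExtension

section StarSquare

variable {S : Type} [DecidableEq S] {a : ℕ} {X : (S → Vert a) ⥤ C} {g : S → Vert a} {t : S}

noncomputable def isColimitCoconeAtOfSquareIsPushout
    (hg' : IsColimit ((selfExtension X).coconeAt (update g t 0)))
    (hsq : SquareIsPushout X 0 (Pi.single t (g t)) (update g t 0) g) :
    IsColimit ((selfExtension X).coconeAt g) :=
  let P := hsq.isPushout (Vert.zero_le_pi _) (Vert.zero_le_pi _) (single_le g t)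
    (update_zero_le g t)
  let δ := belowMk (g := g) _ (atMostOneSupport_single t (g t)) (single_le g t)
  have hw (c : Cocone _) : X.map (homOfLE (Vert.zero_le_pi _)) ≫ c.ι.app δ =
      X.map (homOfLE (Vert.zero_le_pi _)) ≫ hg'.desc (restrictCocone (update_zero_le g t) c) :=
    (c.w (belowHomOfLE (j := belowMk 0 atMostOneSupport_zero (Vert.zero_le_pi _))
      (Vert.zero_le_pi _))).trans (selfExtension_fac hg' (restrictCocone (update_zero_le g t) c)
        (belowMk 0 atMostOneSupport_zero (Vert.zero_le_pi _))).symm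
  { desc c := P.desc (c.ι.app δ) (hg'.desc (restrictCocone (update_zero_le g t) c)) (hw c)
    fac c j := by
      have hinl : X.map (homOfLE (single_le g t)) ≫ P.desc _ _ (hw c) = c.ι.app δ :=
        P.inl_desc _ _ _
      have hinr : X.map (homOfLE (update_zero_le g t)) ≫ P.desc _ _ (hw c) =
          hg'.desc (restrictCocone (update_zero_le g t) c) :=
        P.inr_desc _ _ _
      rw [selfExtension_coconeAt_ι_app_comp]
      by_cases hj : j.left.obj t = 0
      · have hle := le_update_zero_of_apply_eq_zero (leOfHom j.hom) hj
        rw [show X.map j.hom = _ from (map_homOfLE_comp X hle (update_zero_le g t)).symm,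
          Category.assoc, hinr]
        exact selfExtension_fac hg' _ (belowMk _ j.left.property hle)
      · have hle := le_single_of_atMostOneSupport j.left.property (leOfHom j.hom) hj
        rw [show X.map j.hom = _ from (map_homOfLE_comp X hle (single_le g t)).symm,
          Category.assoc, hinl]
        exact c.w (belowHomOfLE (j' := δ) hle)
    uniq c m hm := by
      have hm' (j : CostructuredArrow _ g) : X.map j.hom ≫ m = c.ι.app j :=
        (selfExtension_coconeAt_ι_app_comp X g j m).symm.trans (hm j)
      refine P.hom_ext ((hm' δ).trans (P.inl_desc _ _ _).symm)
        (.trans (selfExtension_hom_ext hg' fun j => ?_) (P.inr_desc _ _ _).symm)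
      exact (map_homOfLE_comp_assoc X (leOfHom j.hom) (update_zero_le g t) m).trans
        ((hm' ((CostructuredArrow.map (homOfLE (update_zero_le g t))).obj j)).trans
          (selfExtension_fac hg' (restrictCocone (update_zero_le g t) c) j).symm) }

section StarCocone

variable {W : C} (inl : X.obj (Pi.single t (g t)) ⟶ W) (inr : X.obj (update g t 0) ⟶ W)

noncomputable def starLeg (j : CostructuredArrow (atMostOneSupport (S := S) (a := a)).ι g) :
    X.obj j.left.obj ⟶ W :=
  if hj : j.left.obj t = 0 then
    X.map (homOfLE (le_update_zero_of_apply_eq_zero (leOfHom j.hom) hj)) ≫ inr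
  else X.map (homOfLE (le_single_of_atMostOneSupport j.left.property (leOfHom j.hom) hj)) ≫ inl

variable {inl inr}

lemma starLeg_of_eq_zero {j : CostructuredArrow (atMostOneSupport (S := S) (a := a)).ι g}
    (hj : j.left.obj t = 0) :
    starLeg inl inr j =
      X.map (homOfLE (le_update_zero_of_apply_eq_zero (leOfHom j.hom) hj)) ≫ inr :=
  dif_pos hj

lemma starLeg_of_ne_zero {j : CostructuredArrow (atMostOneSupport (S := S) (a := a)).ι g}
    (hj : j.left.obj t ≠ 0) :
    starLeg inl inr j =
      X.map (homOfLE (le_single_of_atMostOneSupport j.left.property (leOfHom j.hom) hj)) ≫ inl :=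
  dif_neg hj

variable (inl inr) in
noncomputable def starCocone
    (w : X.map (homOfLE (Vert.zero_le_pi _)) ≫ inl = X.map (homOfLE (Vert.zero_le_pi _)) ≫ inr) :
    Cocone (CostructuredArrow.proj (atMostOneSupport (S := S) (a := a)).ι g ⋙
      atMostOneSupport.ι ⋙ X) where
  pt := W
  ι :=
    { app := starLeg inl inr
      naturality := fun j j' f => by
        have hjj' : j.left.obj ≤ j'.left.obj := leOfHom f.left.hom
        refine (?_ : X.map (homOfLE hjj') ≫ starLeg inl inr j' = starLeg inl inr j).trans
          (Category.comp_id _).symm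
        by_cases hj' : j'.left.obj t = 0
        · rw [starLeg_of_eq_zero hj', starLeg_of_eq_zero ((hjj' t).trans hj'.le |>.antisymm
            (Vert.zero_le _)), map_homOfLE_comp_assoc]
        by_cases hj : j.left.obj t = 0
        · have hj0 : j.left.obj ≤ 0 := le_zero_of_le_single
            (hjj'.trans (le_single_of_atMostOneSupport j'.left.property (leOfHom j'.hom) hj')) hj
          rw [starLeg_of_ne_zero hj', starLeg_of_eq_zero hj, map_homOfLE_comp_assoc,
            ← map_homOfLE_comp_assoc X hj0 (Vert.zero_le_pi _), w, map_homOfLE_comp_assoc]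
        · rw [starLeg_of_ne_zero hj', starLeg_of_ne_zero hj, map_homOfLE_comp_assoc] }

end StarCocone

lemma squareIsPushout_of_isColimit (ht : g t ≠ 0)
    (hg : IsColimit ((selfExtension X).coconeAt g))
    (hg' : IsColimit ((selfExtension X).coconeAt (update g t 0))) :
    SquareIsPushout X 0 (Pi.single t (g t)) (update g t 0) g := by
  let δ := belowMk (g := g) _ (atMostOneSupport_single t (g t)) (single_le g t)
  have hδ : δ.left.obj t ≠ 0 := by simpa [δ, belowMk] using ht
  refine ⟨Vert.zero_le_pi _, Vert.zero_le_pi _, single_le g t, update_zero_le g t,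
    IsPushout.of_isColimit' ⟨by rw [map_homOfLE_comp, map_homOfLE_comp]⟩
      (PushoutCocone.IsColimit.mk _ (fun sc => hg.desc (starCocone sc.inl sc.inr sc.condition))
        (fun sc => ?_) (fun sc => ?_) (fun sc m hinl hinr => ?_))⟩
  · refine (selfExtension_fac hg _ δ).trans ((starLeg_of_ne_zero hδ).trans ?_)
    change X.map (𝟙 (Pi.single t (g t))) ≫ sc.inl = sc.inl
    rw [X.map_id, Category.id_comp]
  · refine selfExtension_hom_ext hg' fun j => ?_
    have hj : j.left.obj t = 0 := le_antisymm (by simpa using leOfHom j.hom t) (Vert.zero_le _)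
    let j' := (CostructuredArrow.map (homOfLE (update_zero_le g t))).obj j
    exact (map_homOfLE_comp_assoc X (leOfHom j.hom) _ _).trans
      ((selfExtension_fac hg _ j').trans (starLeg_of_eq_zero (j := j') hj))
  · refine selfExtension_hom_ext hg fun j => ?_
    refine .trans ?_ (selfExtension_fac hg (starCocone sc.inl sc.inr sc.condition) j).symm
    change X.map j.hom ≫ m = starLeg sc.inl sc.inr j
    by_cases hj : j.left.obj t = 0
    · rw [starLeg_of_eq_zero hj, ← hinr]
      exact (map_homOfLE_comp_assoc X _ _ m).symm
    · rw [starLeg_of_ne_zero hj, ← hinl]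
      exact (map_homOfLE_comp_assoc X _ _ m).symm

end StarSquare

section LeftKanExtension

variable {S : Type} [Fintype S] [DecidableEq S] {a : ℕ} {X : (S → Vert a) ⥤ C}

/-- Induction on `g`: for `s ≠ t` in the support of `g`, paste the star square of `update g s 0`
with the based face square of `g` in the directions `t, s`. -/
lemma BasedFacesArePushouts.squareIsPushout_star (h : BasedFacesArePushouts X)
    (g : S → Vert a) (t : S) : SquareIsPushout X 0 (Pi.single t (g t)) (update g t 0) g := by
  induction g using WellFoundedLT.induction with
  | _ g ih =>
  by_cases hsupp : ∃ s, s ≠ t ∧ g s ≠ 0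
  · obtain ⟨s, hst, hs⟩ := hsupp
    have top := ih (update g s 0) (update_zero_lt hs)
    rw [update_of_ne hst.symm] at top
    have bot := h.faceIsPushout (c := g) hst.symm (g t) (g s)
    rw [FaceIsPushout, faceVertex_of_left_eq _ _ rfl, faceVertex_of_right_eq hst.symm _ _ rfl,
      faceVertex_self _ _ rfl rfl, faceVertex, update_comm hst.symm] at bot
    exact top.paste_vert bot
  · push Not at hsupp
    have hsingle : Pi.single t (g t) = g := funext fun r => by
      by_cases hr : r = t
      · subst hr; simp
      · simp [hr, hsupp r hr]
    have hzero : update g t 0 = 0 := by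
      nth_rw 1 [← hsingle]
      simp [Pi.single]
    rw [hzero, hsingle]
    exact .of_vert_refl (Vert.zero_le_pi g)

lemma BasedFacesArePushouts.nonempty_isColimit (h : BasedFacesArePushouts X) (g : S → Vert a) :
    Nonempty (IsColimit ((selfExtension X).coconeAt g)) := by
  induction g using WellFoundedLT.induction with
  | _ g ih =>
  by_cases hg : atMostOneSupport g
  · exact ⟨isColimitCoconeAtOfAtMostOneSupport X hg⟩
  · obtain ⟨-, t, -, ht, -⟩ : ∃ s t, g s ≠ 0 ∧ g t ≠ 0 ∧ s ≠ t := by simpa using hg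
    obtain ⟨hg'⟩ := ih _ (update_zero_lt ht)
    exact ⟨isColimitCoconeAtOfSquareIsPushout hg' (h.squareIsPushout_star g t)⟩

lemma BasedFacesArePushouts.isLeftKanExtension (h : BasedFacesArePushouts X) :
    X.IsLeftKanExtension (𝟙 (atMostOneSupport.ι ⋙ X)) :=
  Functor.LeftExtension.IsPointwiseLeftKanExtension.isLeftKanExtension
    (E := selfExtension X) fun g => (h.nonempty_isColimit g).some

/-- The based face square with corner `0` in the directions `s, t` is what remains of the star
square of its top vertex in direction `t` after cancelling the star square of its left edge. -/
lemma basedFacesArePushouts_of_isLeftKanExtension [HasFiniteColimits C]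
    (hX : X.IsLeftKanExtension (𝟙 (atMostOneSupport.ι ⋙ X))) : BasedFacesArePushouts X := by
  have pw := Functor.isPointwiseLeftKanExtensionOfIsLeftKanExtension X
    (𝟙 (atMostOneSupport.ι ⋙ X))
  intro c s t hst p q hp hq
  have hq' : faceVertex c s t p q t ≠ 0 := by rw [faceVertex_apply_right]; exact hq.ne'
  have hq₀ : faceVertex c s t 0 q t ≠ 0 := by rw [faceVertex_apply_right]; exact hq.ne'
  have big := squareIsPushout_of_isColimit hq' (pw _) (pw _)
  have top := squareIsPushout_of_isColimit hq₀ (pw _) (pw _)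
  rw [faceVertex_apply_right, update_faceVertex_right] at big top
  exact (big.of_top top (faceVertex_mono hp.le le_rfl) (faceVertex_mono hp.le le_rfl)).flip

end LeftKanExtension

theorem stmt11_general {S : Type} [Fintype S] [DecidableEq S] {a : ℕ}
    [HasFiniteColimits C] (X : (S → Vert a) ⥤ C) :
    ((X.IsLeftKanExtension (𝟙 (ObjectProperty.ι
        (fun g : S → Vert a => ∀ s t : S, g s ≠ 0 → g t ≠ 0 → s = t) ⋙ X))) ↔
      (∀ (y : S → Vert a) (hy : ∀ s, 0 < y s),
        IsStronglyCocartesianCube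
          (restrictedCube X (fun _ => 0) y (fun s => (hy s).le)))) ∧
    ((∀ (y : S → Vert a) (hy : ∀ s, 0 < y s),
        IsStronglyCocartesianCube
          (restrictedCube X (fun _ => 0) y (fun s => (hy s).le))) ↔
      (∀ (x y : S → Vert a) (hlt : ∀ s, x s < y s),
        IsStronglyCocartesianCube (restrictedCube X x y (fun s => (hlt s).le)))) := by
  have cube_of_based (h : BasedFacesArePushouts X) := h.facesArePushouts.isStronglyCocartesianCube
  refine ⟨⟨fun hX => ?_, fun H => ?_⟩, ⟨fun H => ?_, fun H y hy => H _ y hy⟩⟩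
  · exact cube_of_based (basedFacesArePushouts_of_isLeftKanExtension hX) _
  · exact (basedFacesArePushouts_of_isStronglyCocartesianCube H).isLeftKanExtension
  · exact cube_of_based (basedFacesArePushouts_of_isStronglyCocartesianCube H)

/-- For a diagram `X : [a]^S → C` (`S` finite, `a ≥ 1`) in a category with finite colimits,
the following are equivalent: (1) `X` is left Kan extended from the subposet of functions
supported on at most one element; (2) for each collection of strictly monotone maps
`f_s : [1] → [a]` with `f_s(0) = 0`, the restricted cube of sidelength 1 is strongly
cocartesian; (3) the same for arbitrary collections of strictly monotone maps `f_s`. -/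
theorem stmt11 {S : Type} [Fintype S] [DecidableEq S] {a : ℕ} (ha : 1 ≤ a)
    [HasFiniteColimits C] (X : (S → Vert a) ⥤ C) :
    ((X.IsLeftKanExtension (𝟙 (ObjectProperty.ι
        (fun g : S → Vert a => ∀ s t : S, g s ≠ 0 → g t ≠ 0 → s = t) ⋙ X))) ↔
      (∀ (y : S → Vert a) (hy : ∀ s, 0 < y s),
        IsStronglyCocartesianCube
          (restrictedCube X (fun _ => 0) y (fun s => (hy s).le)))) ∧
    ((∀ (y : S → Vert a) (hy : ∀ s, 0 < y s),
        IsStronglyCocartesianCube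
          (restrictedCube X (fun _ => 0) y (fun s => (hy s).le))) ↔
      (∀ (x y : S → Vert a) (hlt : ∀ s, x s < y s),
        IsStronglyCocartesianCube (restrictedCube X x y (fun s => (hlt s).le)))) :=
  stmt11_general X
end

section
/- For r ≥ 0 define i_r : [1]^{r+1} → [2]^{r+1} by i_r(v) = 2v − δ_{min v}, where δ_{min v} = 0 if v = 0 and δ_{min v} is the unit vector at the smallest nonzero coordinate of v otherwise. Then i_r is a monotone (order-preserving) injection, and for every v ≠ 0 the vector i_r(v) has exactly one coordinate equal to 1. Moreover i_r commutes with the co-semi-simplicial structure maps given by inserting a 0 coordinate: inserting a 0 in position j of v and applying i_{r+1} agrees with inserting a 0 in position j of i_r(v). -/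
/-- The map `i_r : [1]^n → [2]^n`, `v ↦ 2v − δ_{min v}`: the coordinate at the smallest
nonzero index of `v` becomes `1`, every other coordinate is doubled. -/
def irMap (n : ℕ) (v : Fin n → Fin 2) : Fin n → Fin 3 := fun j =>
  if v j = 0 then 0
  else if ∃ k : Fin n, k < j ∧ v k ≠ 0 then 2 else 1

lemma irMap_eq_zero_iff {n : ℕ} (v : Fin n → Fin 2) (j : Fin n) :
    irMap n v j = 0 ↔ v j = 0 := by
  unfold irMap; split_ifs <;> simp_all

/-- `i_r` is a monotone injection; for every `v ≠ 0` the vector `i_r(v)` has exactly one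
coordinate equal to `1`; and `i_r` commutes with the co-semi-simplicial structure maps
given by inserting a `0` coordinate. -/
theorem stmt14 :
    (∀ n : ℕ, Monotone (irMap n)) ∧
    (∀ n : ℕ, Function.Injective (irMap n)) ∧
    (∀ (n : ℕ) (v : Fin n → Fin 2), v ≠ 0 → ∃! j : Fin n, irMap n v j = 1) ∧
    (∀ (n : ℕ) (j : Fin (n + 1)) (v : Fin n → Fin 2),
      irMap (n + 1) (j.insertNth 0 v) = j.insertNth 0 (irMap n v)) := by
  refine ⟨?_, ?_, ?_, ?_⟩
  · intro n v w hvw j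
    unfold irMap
    by_cases hv : v j = 0
    · simp only [hv, if_pos]
      exact Fin.zero_le _
    · have hw : w j ≠ 0 := fun h => hv (le_antisymm (h ▸ hvw j) (Fin.zero_le _))
      rw [if_neg hv, if_neg hw]
      by_cases he : ∃ k : Fin n, k < j ∧ v k ≠ 0
      · obtain ⟨k, hk, hvk⟩ := he
        have hwk : w k ≠ 0 := fun h => hvk (le_antisymm (h ▸ hvw k) (Fin.zero_le _))
        rw [if_pos ⟨k, hk, hvk⟩, if_pos ⟨k, hk, hwk⟩]
      · rw [if_neg he]
        split_ifs
        · exact Fin.le_def.mpr (by norm_num)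
        · exact le_refl _
  · intro n v w h
    funext j
    have h0 : v j = 0 ↔ w j = 0 := by
      rw [← irMap_eq_zero_iff v j, ← irMap_eq_zero_iff w j, congrFun h j]
    have h1 := (v j).isLt
    have h2 := (w j).isLt
    rw [Fin.ext_iff] at h0 ⊢
    simp only [Fin.val_zero] at h0
    omega
  · intro n v hv
    have hne : ∃ j, v j ≠ 0 := by
      by_contra h; push_neg at h; exact hv (funext h)
    classical
    set s : Finset (Fin n) := Finset.univ.filter (fun j => v j ≠ 0) with hs
    have hsne : s.Nonempty := ⟨hne.choose, by simp [hs, hne.choose_spec]⟩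
    set j := s.min' hsne with hj
    have hjv : v j ≠ 0 := by
      have := s.min'_mem hsne
      simpa [hs] using this
    have hmin : ∀ k, v k ≠ 0 → j ≤ k := fun k hk =>
      s.min'_le k (by simp [hs, hk])
    refine ⟨j, ?_, ?_⟩
    · show irMap n v j = 1
      unfold irMap
      rw [if_neg hjv, if_neg]
      rintro ⟨k, hk, hvk⟩
      exact absurd (hmin k hvk) (not_le.mpr hk)
    · intro j' hj'
      unfold irMap at hj'
      split_ifs at hj' with h1 h2
      · simp at hj'
      · simp at hj'
      · push_neg at h2
        rcases lt_or_eq_of_le (hmin j' h1) with hlt | heq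
        · exact absurd (h2 j hlt) hjv
        · exact heq.symm
  · intro n j v
    funext i
    rcases eq_or_ne i j with rfl | hij
    · simp [irMap, Fin.insertNth_apply_same]
    · obtain ⟨k, rfl⟩ := Fin.exists_succAbove_eq hij
      have hiff : (∃ k' : Fin (n+1), k' < j.succAbove k ∧ (j.insertNth (0 : Fin 2) v : Fin (n+1) → Fin 2) k' ≠ 0) ↔
          (∃ m : Fin n, m < k ∧ v m ≠ 0) := by
        constructor
        · rintro ⟨k', hk', hne⟩
          have hk'j : k' ≠ j := by rintro rfl; simp [Fin.insertNth_apply_same] at hne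
          obtain ⟨m, rfl⟩ := Fin.exists_succAbove_eq hk'j
          rw [Fin.insertNth_apply_succAbove] at hne
          exact ⟨m, (Fin.succAbove_lt_succAbove_iff).mp hk', hne⟩
        · rintro ⟨m, hm, hne⟩
          exact ⟨j.succAbove m, (Fin.succAbove_lt_succAbove_iff).mpr hm,
            by rwa [Fin.insertNth_apply_succAbove]⟩
      simp only [irMap, Fin.insertNth_apply_succAbove, hiff]
end

section
/- Let M be a commutative monoid and m ∈ M such that for every x ∈ M there exist y ∈ M and g ∈ ℕ with x + y = g·m (i.e. every element is a 'summand' of a multiple of m). Then the localization of M at the submonoid {n·m : n ∈ ℕ} is a group, and consequently this localization is canonically isomorphic to the Grothendieck group completion of M. -/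
/-!
Since `x + y = g • m`, the image of `x` in the localization at the multiples of `m` is a summand
of the invertible element `g • m`, hence invertible; every fraction `x - s` is then invertible.
Once all of `M` becomes invertible, the localization map at the multiples of `m` is also a
localization map at `⊤`, and uniqueness of localizations gives the isomorphism with the group
completion.
-/

namespace AddSubmonoid.LocalizationMap

variable {M N : Type*} [AddCommMonoid M] [AddCommMonoid N] {S : AddSubmonoid M}

theorem isAddUnit_map_of_add_mem (f : S.LocalizationMap N) {x y : M} (hxy : x + y ∈ S) :
    IsAddUnit (f x) :=
  isAddUnit_of_add_isAddUnit_left (y := f y) (map_add f x y ▸ f.map_addUnits ⟨x + y, hxy⟩)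

theorem isAddUnit_of_forall_isAddUnit_map (f : S.LocalizationMap N)
    (hf : ∀ x, IsAddUnit (f x)) (z : N) : IsAddUnit z := by
  obtain ⟨⟨x, s⟩, hz⟩ := f.surj z
  exact isAddUnit_of_add_isAddUnit_left (y := f s) (hz ▸ hf x)

def ofLE (f : S.LocalizationMap N) {T : AddSubmonoid M} (hST : S ≤ T)
    (hT : ∀ y : T, IsAddUnit (f y)) : T.LocalizationMap N :=
  f.toAddMonoidHom.toLocalizationMap hT
    (fun z ↦
      let ⟨⟨x, s⟩, hz⟩ := f.surj z
      ⟨(x, ⟨s, hST s.2⟩), hz⟩)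
    (fun _ _ hxy ↦
      let ⟨c, hc⟩ := f.exists_of_eq hxy
      ⟨⟨c, hST c.2⟩, hc⟩)

end AddSubmonoid.LocalizationMap

/-- If every element of a commutative monoid `M` is a summand of a multiple of `m`, then
the localization of `M` at the submonoid of multiples of `m` is a group, and is hence
canonically isomorphic to the Grothendieck group completion of `M` (the localization at
the full submonoid), compatibly with the canonical maps from `M`. -/
theorem stmt15 {M : Type} [AddCommMonoid M] (m : M)
    (h : ∀ x : M, ∃ (y : M) (g : ℕ), x + y = g • m) :
    (∀ z : AddLocalization (AddSubmonoid.multiples m), ∃ w, z + w = 0) ∧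
    ∃ e : AddLocalization (AddSubmonoid.multiples m) ≃+
        AddLocalization (⊤ : AddSubmonoid M),
      ∀ x : M, e (AddLocalization.mk x 0) = AddLocalization.mk x 0 := by
  set f := AddLocalization.addMonoidOf (AddSubmonoid.multiples m)
  have hf : ∀ x, IsAddUnit (f x) := fun x ↦
    let ⟨y, g, hxy⟩ := h x
    f.isAddUnit_map_of_add_mem ⟨g, hxy.symm⟩
  set k := f.ofLE le_top fun y ↦ hf y
  refine ⟨fun z ↦ (f.isAddUnit_of_forall_isAddUnit_map hf z).exists_neg,
    k.addEquivOfLocalizations (AddLocalization.addMonoidOf ⊤),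
    fun x ↦ k.lift_eq (AddLocalization.addMonoidOf ⊤).map_addUnits x⟩
end
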